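/- arXiv:2302.13250 — 6 statements merged into one kernel-verified Lean document; each statement's English description precedes it below -/
import Mathlib

section
/- Let L be a non-abelian minimal subnormal subgroup of a finite group G. Then the normal closure L^G of L in G is a minimal normal subgroup of G. -/
open Subgroup
open scoped Pointwise

section Defs

variable {ι : Type*}

/-- `σ` is a partition of the set of all primes. -/
structure IsPrimePartition (σ : ι → Set ℕ) : Prop where
  prime_of_mem : ∀ i p, p ∈ σ i → p.Prime
  existsUnique_mem : ∀ p : ℕ, p.Prime → ∃! i, p ∈ σ i

/-- every prime dividing `n` lies in the block `σ i`. -/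
def IsSigmaNumber (σ : ι → Set ℕ) (i : ι) (n : ℕ) : Prop :=
  ∀ p : ℕ, p.Prime → p ∣ n → p ∈ σ i

/-- `G` is a `σ i`-group. -/
def IsSigmaIGroup (σ : ι → Set ℕ) (i : ι) (G : Type*) [Group G] : Prop :=
  IsSigmaNumber σ i (Nat.card G)

/-- `G` is σ-primary: it is a `σ i`-group for some `i`. -/
def IsSigmaPrimary (σ : ι → Set ℕ) (G : Type*) [Group G] : Prop :=
  ∃ i, IsSigmaIGroup σ i G

/-- `G` is σ-nilpotent: `G` is the internal direct product of normal
σ-primary subgroups (one `σ i`-subgroup for each block). -/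
def IsSigmaNilpotent (σ : ι → Set ℕ) (G : Type*) [Group G] : Prop :=
  ∃ H : ι → Subgroup G, (∀ i, (H i).Normal) ∧ (∀ i, IsSigmaIGroup σ i ↥(H i)) ∧
    iSupIndep H ∧ iSup H = ⊤

/-- One step in a σ-subnormal chain: `A ≤ B` and either `A` is normal in `B` or
`B/(A_B)` (quotient by the normal core of `A` in `B`) is σ-primary. -/
def SigmaSubnormalStep (σ : ι → Set ℕ) {G : Type*} [Group G] (A B : Subgroup G) : Prop :=
  A ≤ B ∧ (((A.subgroupOf B).Normal) ∨
    IsSigmaPrimary σ (↥B ⧸ (A.subgroupOf B).normalCore))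

/-- `A` is σ-subnormal in `G`. -/
def IsSigmaSubnormal (σ : ι → Set ℕ) {G : Type*} [Group G] (A : Subgroup G) : Prop :=
  ∃ n, ∃ C : Fin (n + 1) → Subgroup G, C 0 = A ∧ C (Fin.last n) = ⊤ ∧
    ∀ k : Fin n, SigmaSubnormalStep σ (C k.castSucc) (C k.succ)

/-- `A` is subnormal in `G`. -/
def IsSubnormalSub {G : Type*} [Group G] (A : Subgroup G) : Prop :=
  ∃ n, ∃ C : Fin (n + 1) → Subgroup G, C 0 = A ∧ C (Fin.last n) = ⊤ ∧
    ∀ k : Fin n, C k.castSucc ≤ C k.succ ∧ ((C k.castSucc).subgroupOf (C k.succ)).Normal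

/-- `M` is a modular subgroup of `G`: a modular element of the subgroup lattice. -/
def IsModularSubgroup {G : Type*} [Group G] (M : Subgroup G) : Prop :=
  (∀ X Z : Subgroup G, X ≤ Z → X ⊔ (M ⊓ Z) = (X ⊔ M) ⊓ Z) ∧
  (∀ Y Z : Subgroup G, M ≤ Z → M ⊔ (Y ⊓ Z) = (M ⊔ Y) ⊓ Z)

/-- `A` is submodular in `G`: there is a chain from `A` to `G` with each
term modular in the next. -/
def IsSubmodular {G : Type*} [Group G] (A : Subgroup G) : Prop :=
  ∃ n, ∃ C : Fin (n + 1) → Subgroup G, C 0 = A ∧ C (Fin.last n) = ⊤ ∧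
    ∀ k : Fin n, C k.castSucc ≤ C k.succ ∧
      IsModularSubgroup ((C k.castSucc).subgroupOf (C k.succ))

/-- `H` is a Hall `σ i`-subgroup of `G`. -/
def IsHallSigmaI (σ : ι → Set ℕ) (i : ι) {G : Type*} [Group G] (H : Subgroup G) : Prop :=
  IsSigmaNumber σ i (Nat.card H) ∧ ∀ p : ℕ, p.Prime → p ∣ H.index → p ∉ σ i

/-- `G` is σ-full: it has a Hall `σ i`-subgroup for every `σ i ∈ σ(G)`. -/
def IsSigmaFull (σ : ι → Set ℕ) (G : Type*) [Group G] : Prop :=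
  ∀ i, (∃ p : ℕ, p.Prime ∧ p ∈ σ i ∧ p ∣ Nat.card G) →
    ∃ H : Subgroup G, IsHallSigmaI σ i H

/-- Two subgroups permute. -/
def Permutes {G : Type*} [Group G] (A B : Subgroup G) : Prop :=
  (A : Set G) * (B : Set G) = (B : Set G) * (A : Set G)

/-- `A` is σ-permutable in `G`: it permutes with every Hall `σ i`-subgroup of `G`
(hence with all their conjugates). -/
def IsSigmaPermutable (σ : ι → Set ℕ) {G : Type*} [Group G] (A : Subgroup G) : Prop :=
  ∀ i, ∀ H : Subgroup G, IsHallSigmaI σ i H → Permutes A H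

/-- `A` is quasinormal (permutable) in `G`. -/
def IsQuasinormal {G : Type*} [Group G] (A : Subgroup G) : Prop :=
  ∀ B : Subgroup G, Permutes A B

/-- `A` is σ-quasinormal in `G`: modular and σ-subnormal. -/
def IsSigmaQuasinormal (σ : ι → Set ℕ) {G : Type*} [Group G] (A : Subgroup G) : Prop :=
  IsModularSubgroup A ∧ IsSigmaSubnormal σ A

/-- σ-permutability is a transitive relation on `G`. -/
def IsPSigmaTGroup (σ : ι → Set ℕ) (G : Type*) [Group G] : Prop :=
  ∀ K H : Subgroup G, H ≤ K → IsSigmaPermutable σ (H.subgroupOf K) →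
    IsSigmaPermutable σ K → IsSigmaPermutable σ H

/-- `H/K` is a chief factor of `G`. -/
def IsChiefFactor (G : Type*) [Group G] (K H : Subgroup G) : Prop :=
  K.Normal ∧ H.Normal ∧ K < H ∧
    ∀ N : Subgroup G, N.Normal → K ≤ N → N ≤ H → N = K ∨ N = H

/-- `G` is σ-soluble: every chief factor of `G` is σ-primary. -/
def IsSigmaSoluble (σ : ι → Set ℕ) (G : Type*) [Group G] : Prop :=
  ∀ K H : Subgroup G, ∀ hc : IsChiefFactor G K H,
    letI := hc.1; IsSigmaPrimary σ (↥H ⧸ K.subgroupOf H)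

/-- The σ-nilpotent residual `G^{𝔑_σ}` of `G`. -/
def sigmaNilpotentResidual (σ : ι → Set ℕ) (G : Type*) [Group G] : Subgroup G :=
  sInf {N : Subgroup G | ∃ h : N.Normal, letI := h; IsSigmaNilpotent σ (G ⧸ N)}

/-- The σ-soluble residual `G^{𝔖_σ}` of `G`. -/
def sigmaSolubleResidual (σ : ι → Set ℕ) (G : Type*) [Group G] : Subgroup G :=
  sInf {N : Subgroup G | ∃ h : N.Normal, letI := h; IsSigmaSoluble σ (G ⧸ N)}

/-- `G` is a σ-SC-group: every chief factor of `G` below `G^{𝔑_σ}` is simple. -/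
def IsSigmaSCGroup (σ : ι → Set ℕ) (G : Type*) [Group G] : Prop :=
  ∀ K H : Subgroup G, ∀ hc : IsChiefFactor G K H, H ≤ sigmaNilpotentResidual σ G →
    letI := hc.1; IsSimpleGroup (↥H ⧸ K.subgroupOf H)

/-- `G` is σ-supersoluble: every chief factor of `G` below `G^{𝔑_σ}` is cyclic. -/
def IsSigmaSupersoluble (σ : ι → Set ℕ) (G : Type*) [Group G] : Prop :=
  ∀ K H : Subgroup G, ∀ hc : IsChiefFactor G K H, H ≤ sigmaNilpotentResidual σ G →
    letI := hc.1; IsCyclic (↥H ⧸ K.subgroupOf H)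

/-- The σ-supersoluble residual `G^{𝔘_σ}` of `G`. -/
def sigmaSupersolubleResidual (σ : ι → Set ℕ) (G : Type*) [Group G] : Subgroup G :=
  sInf {N : Subgroup G | ∃ h : N.Normal, letI := h; IsSigmaSupersoluble σ (G ⧸ N)}

/-- The soluble radical `G_𝔖`: the largest soluble normal subgroup of `G`. -/
def solubleRadical (G : Type*) [Group G] : Subgroup G :=
  sSup {N : Subgroup G | N.Normal ∧ IsSolvable ↥N}

/-- `O_{σ i}(G)`: the largest normal `σ i`-subgroup of `G`. -/
def sigmaCore (σ : ι → Set ℕ) (i : ι) (G : Type*) [Group G] : Subgroup G :=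
  sSup {N : Subgroup G | N.Normal ∧ IsSigmaIGroup σ i ↥N}

/-- `O^{σ i}(G)`: the smallest normal subgroup of `G` with `σ i`-quotient. -/
def sigmaIResidual (σ : ι → Set ℕ) (i : ι) (G : Type*) [Group G] : Subgroup G :=
  sInf {N : Subgroup G | ∃ h : N.Normal, letI := h; IsSigmaIGroup σ i (G ⧸ N)}

end Defs

/-!
A minimal subnormal subgroup `L` is simple, and being non-abelian it is perfect. Wielandt's
argument (induction along a subnormal series, closed by the three subgroups lemma) shows that `L`
lies in every subnormal subgroup that does not centralize it. Hence distinct conjugates of `L`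
commute, and a normal subgroup `N ≤ L^G` either contains `L`, and then equals `L^G`, or centralizes
every conjugate of `L`; as `L^G` is generated by pairwise commuting centreless conjugates of `L`,
its centre is trivial and `N = 1`.
-/

namespace Subgroup

variable {G : Type*} [Group G]

theorem isSubnormalSub_iff_isSubnormal {A : Subgroup G} : IsSubnormalSub A ↔ A.IsSubnormal := by
  constructor
  · rintro ⟨n, C, rfl, hlast, hstep⟩
    induction n with
    | zero => exact hlast ▸ IsSubnormal.top
    | succ n ih =>
      exact .step _ _ (hstep 0).1 (ih (C ∘ Fin.succ) hlast fun k => hstep k.succ) (hstep 0).2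
  · intro h
    induction h with
    | top => exact ⟨0, fun _ => ⊤, rfl, rfl, Fin.elim0⟩
    | step H K hHK _ hN ih =>
      obtain ⟨n, C, rfl, hlast, hstep⟩ := ih
      refine ⟨n + 1, Fin.cons H C, rfl, hlast, Fin.cases ⟨hHK, hN⟩ fun k => hstep k⟩

/-- Unlike `IsSubnormal`, this relative notion has an induction principle peeling the subnormal
series off at the top, as Wielandt's argument needs. -/
def IsSubnormalIn (A B : Subgroup G) : Prop :=
  Relation.ReflTransGen (fun H K : Subgroup G => H ≤ K ∧ K ≤ normalizer H) A B

theorem IsSubnormal.isSubnormalIn_top {A : Subgroup G} (h : A.IsSubnormal) :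
    IsSubnormalIn A ⊤ := by
  induction h with
  | top => exact .refl
  | step H K hHK _ hN ih =>
    exact .head ⟨hHK, (normal_subgroupOf_iff_le_normalizer hHK).mp hN⟩ ih

theorem IsSubnormalIn.le {A B : Subgroup G} (h : IsSubnormalIn A B) : A ≤ B :=
  Relation.ReflTransGen.trans_induction_on h (fun _ => le_rfl) (fun h => h.1) fun _ _ => le_trans

theorem IsSubnormalIn.inf_of_le {A B C : Subgroup G} (h : IsSubnormalIn A B) (hAC : A ≤ C) :
    IsSubnormalIn A (B ⊓ C) := by
  induction h with
  | refl => rw [inf_eq_left.mpr hAC]; exact .refl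
  | tail _ hKT ih =>
    exact ih.tail ⟨inf_le_inf_right C hKT.1,
      (inf_le_inf hKT.2 le_normalizer).trans inf_normalizer_le_normalizer_inf⟩

theorem isSimpleGroup_of_minimal {L : Subgroup G} (hL : L.IsSubnormal) (hne : L ≠ ⊥)
    (hmin : ∀ S : Subgroup G, S.IsSubnormal → S ≤ L → S = ⊥ ∨ S = L) :
    IsSimpleGroup L where
  toNontrivial := (nontrivial_iff_ne_bot L).mpr hne
  eq_bot_or_eq_top_of_normal H hH := by
    refine (hmin _ (hH.isSubnormal.trans' hL) (map_subtype_le H)).imp (fun h => ?_) fun h => ?_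
    · exact (map_eq_bot_iff_of_injective H L.subtype_injective).mp h
    · rw [← comap_map_eq_self_of_injective L.subtype_injective H, h, comap_subtype,
        subgroupOf_self]

section SimpleSubnormal

variable {L K N T : Subgroup G} [IsSimpleGroup L]

theorem eq_bot_or_eq_of_le_normalizer (hKL : K ≤ L) (hLK : L ≤ normalizer K) :
    K = ⊥ ∨ K = L := by
  have := IsSimpleGroup.eq_bot_or_eq_top_of_normal _
    ((normal_subgroupOf_iff_le_normalizer hKL).mpr hLK)
  rwa [subgroupOf_eq_bot, disjoint_of_le_iff_left_eq_bot hKL, subgroupOf_eq_top,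
    hKL.ge_iff_eq] at this

theorem commutator_self_eq_self_of_ne_bot (h : ⁅L, L⁆ ≠ ⊥) : ⁅L, L⁆ = L :=
  (eq_bot_or_eq_of_le_normalizer (commutator_le_self L)
    (normalizer_commutator_ge_left L L)).resolve_left h

variable (hperf : ⁅L, L⁆ = L)
include hperf

theorem inf_centralizer_self_eq_bot : L ⊓ centralizer L = ⊥ := by
  have hcomm : ⁅L, L ⊓ centralizer L⁆ = ⊥ := by
    rw [commutator_comm, commutator_eq_bot_iff_le_centralizer]
    exact inf_le_right
  refine (eq_bot_or_eq_of_le_normalizer inf_le_left ?_).resolve_right fun h => ?_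
  · rw [le_normalizer_iff_commutator_le_right, hcomm]
    exact bot_le
  · rw [h, hperf] at hcomm
    exact (nontrivial_iff_ne_bot L).mp inferInstance hcomm

theorem commutator_eq_bot_of_inf_eq_bot (hLT : IsSubnormalIn L T) (hNT : N ≤ T)
    (hTN : T ≤ normalizer N) (hLN : L ⊓ N = ⊥) : ⁅L, N⁆ = ⊥ := by
  induction hLT generalizing N with
  | refl =>
    obtain rfl | hNL := eq_bot_or_eq_of_le_normalizer hNT hTN
    · exact commutator_bot_right L
    · rw [hNL, inf_idem] at hLN
      exact absurd hLN ((nontrivial_iff_ne_bot L).mp inferInstance)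
  | @tail M T hLM hMT ih =>
    have hLNM : ⁅L, N ⊓ M⁆ = ⊥ :=
      ih inf_le_right ((le_inf (hMT.1.trans hTN) le_normalizer).trans
        inf_normalizer_le_normalizer_inf) (eq_bot_mono (inf_le_inf_left L inf_le_left) hLN)
    have hLN_le : ⁅L, N⁆ ≤ N ⊓ M :=
      le_inf (le_normalizer_iff_commutator_le_right.mp ((IsSubnormalIn.le hLM).trans
          (hMT.1.trans hTN)))
        ((commutator_mono (IsSubnormalIn.le hLM) le_rfl).trans
          (le_normalizer_iff_commutator_le_left.mp (hNT.trans hMT.2)))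
    -- `⁅L, N⁆ ≤ N ⊓ M` gives `⁅⁅L, N⁆, L⁆ = ⊥`; the three subgroups lemma then kills
    -- `⁅⁅L, L⁆, N⁆ = ⁅L, N⁆`.
    have h₁ : ⁅⁅L, N⁆, L⁆ = ⊥ :=
      eq_bot_mono ((commutator_mono hLN_le le_rfl).trans_eq (commutator_comm _ _)) hLNM
    have h₂ : ⁅⁅N, L⁆, L⁆ = ⊥ := by rwa [commutator_comm N L]
    simpa only [hperf] using commutator_commutator_eq_bot_of_rotate h₁ h₂

theorem le_or_commutator_eq_bot (hL : L.IsSubnormal) (hK : K.IsSubnormal) :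
    L ≤ K ∨ ⁅L, K⁆ = ⊥ := by
  induction hK with
  | top => exact .inl le_top
  | step K M hKM _ hK ih =>
    obtain hLM | hLM := ih
    · have hMK := (normal_subgroupOf_iff_le_normalizer hKM).mp hK
      obtain h | h := eq_bot_or_eq_of_le_normalizer inf_le_left
        ((le_inf le_normalizer (hLM.trans hMK)).trans inf_normalizer_le_normalizer_inf)
      · have hLM' := hL.isSubnormalIn_top.inf_of_le hLM
        rw [top_inf_eq] at hLM'
        exact .inr (commutator_eq_bot_of_inf_eq_bot hperf hLM' hKM hMK h)
      · exact .inl (inf_eq_left.mp h)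
    · exact .inr (eq_bot_mono (commutator_mono le_rfl hKM) hLM)

end SimpleSubnormal

theorem commutator_eq_bot_of_ne {L K : Subgroup G} [IsSimpleGroup L] [IsSimpleGroup K]
    (hLperf : ⁅L, L⁆ = L) (hKperf : ⁅K, K⁆ = K) (hL : L.IsSubnormal) (hK : K.IsSubnormal)
    (hLK : L ≠ K) : ⁅L, K⁆ = ⊥ := by
  obtain h | h := le_or_commutator_eq_bot hLperf hL hK
  · obtain h' | h' := le_or_commutator_eq_bot hKperf hK hL
    · exact absurd (le_antisymm h h') hLK
    · rwa [commutator_comm]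
  · exact h

theorem eq_one_of_mem_iSup_of_mem_centralizer {ι : Type*} [Finite ι] {H : ι → Subgroup G}
    (hcomm : Pairwise fun i j => ∀ x y : G, x ∈ H i → y ∈ H j → Commute x y)
    (hcenter : ∀ i, H i ⊓ centralizer (H i) = ⊥) {z : G} (hz : z ∈ ⨆ i, H i)
    (hzc : ∀ i, z ∈ centralizer (H i)) : z = 1 := by
  classical
  cases nonempty_fintype ι
  obtain ⟨f, rfl⟩ : z ∈ (noncommPiCoprod hcomm).range := by rwa [noncommPiCoprod_range]
  suffices hf : ∀ i, (f i : G) = 1 by simp [show f = 1 from funext fun i => Subtype.ext (hf i)]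
  intro i
  have hzi := hzc i
  rw [noncommPiCoprod_apply, ← Finset.mul_noncommProd_erase _ (Finset.mem_univ i) _
    fun a _ b _ hab => hcomm hab _ _ (f a).2 (f b).2] at hzi
  rw [← mem_bot, ← hcenter i]
  -- `f i` is `z` times the inverse of the other factors, all of which centralize `H i`.
  refine ⟨(f i).2, (mul_mem_cancel_right (noncommProd_mem _ _ fun j hj => ?_)).mp hzi⟩
  exact mem_centralizer_iff.mpr fun x hx =>
    (hcomm (Finset.ne_of_mem_erase hj).symm x _ hx (f j).2).eq

theorem smul_commutator {α : Type*} [Group α] [MulDistribMulAction α G] (a : α)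
    (H K : Subgroup G) : a • ⁅H, K⁆ = ⁅a • H, a • K⁆ :=
  map_commutator _ _ _

theorem normalClosure_le_iSup_smul (H : Subgroup G) :
    normalClosure (H : Set G) ≤ ⨆ g : ConjAct G, g • H := by
  refine closure_le _ |>.mpr fun x hx => ?_
  obtain ⟨a, ha, hax⟩ := Group.mem_conjugatesOfSet_iff.mp hx
  obtain ⟨c, rfl⟩ := isConj_iff.mp hax
  exact mem_iSup_of_mem (ConjAct.toConjAct c) (smul_mem_pointwise_smul a _ H ha)

theorem eq_bot_of_le_normalClosure_of_not_le {L N : Subgroup G} [Finite G] [IsSimpleGroup L]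
    (hperf : ⁅L, L⁆ = L) (hL : L.IsSubnormal) (hN : N.Normal) (hNL : N ≤ normalClosure L)
    (hLN : ¬ L ≤ N) : N = ⊥ := by
  let S := MulAction.orbit (ConjAct G) L
  have hS : ∀ K ∈ S,
      ∃ _ : IsSimpleGroup K, ⁅K, K⁆ = K ∧ K.IsSubnormal ∧ ⁅K, N⁆ = ⊥ := by
    rintro _ ⟨g, rfl⟩
    have := (equivSMul g L).symm.isSimpleGroup
    have hperf' : ⁅g • L, g • L⁆ = g • L := by rw [← smul_commutator, hperf]
    refine ⟨this, hperf', hL.smul g, (le_or_commutator_eq_bot hperf' (hL.smul g)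
      hN.isSubnormal).resolve_left fun h => hLN ?_⟩
    rwa [pointwise_smul_subset_iff, hN.conjAct] at h
  have hcomm : Pairwise fun K K' : S => ∀ x y : G, x ∈ (K : Subgroup G) →
      y ∈ (K' : Subgroup G) → Commute x y := by
    rintro ⟨K, hK⟩ ⟨K', hK'⟩ hne x y hx hy
    obtain ⟨_, hKperf, hKsub, -⟩ := hS K hK
    obtain ⟨_, hK'perf, hK'sub, -⟩ := hS K' hK'
    have := commutator_eq_bot_of_ne hKperf hK'perf hKsub hK'sub (Subtype.coe_ne_coe.mpr hne)
    exact (mem_centralizer_iff.mp (commutator_eq_bot_iff_le_centralizer.mp this hx) y hy).symm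
  refine eq_bot_iff.mpr fun z hz => mem_bot.mpr ?_
  refine eq_one_of_mem_iSup_of_mem_centralizer hcomm (fun ⟨K, hK⟩ => ?_) ?_
    fun ⟨K, hK⟩ => ?_
  · obtain ⟨_, hKperf, -⟩ := hS K hK
    exact inf_centralizer_self_eq_bot hKperf
  · exact (normalClosure_le_iSup_smul L).trans
      (iSup_le fun g => le_iSup_of_le ⟨g • L, g, rfl⟩ le_rfl) (hNL hz)
  · obtain ⟨_, -, -, hKN⟩ := hS K hK
    rw [commutator_comm, commutator_eq_bot_iff_le_centralizer] at hKN
    exact hKN hz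

end Subgroup

/-- If `L` is a non-abelian minimal subnormal subgroup of a finite group `G`,
then the normal closure `L^G` is a minimal normal subgroup of `G`. -/
theorem statement_1 {G : Type*} [Group G] [Finite G] (L : Subgroup G)
    (hsub : IsSubnormalSub L) (hne : L ≠ ⊥)
    (hmin : ∀ S : Subgroup G, IsSubnormalSub S → S ≤ L → S = ⊥ ∨ S = L)
    (hnonab : ¬ ∀ a ∈ L, ∀ b ∈ L, a * b = b * a) :
    Subgroup.normalClosure (L : Set G) ≠ ⊥ ∧
      ∀ N : Subgroup G, N.Normal → N ≤ Subgroup.normalClosure (L : Set G) →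
        N = ⊥ ∨ N = Subgroup.normalClosure (L : Set G) := by
  have hL : L.IsSubnormal := isSubnormalSub_iff_isSubnormal.mp hsub
  have := isSimpleGroup_of_minimal hL hne fun S hS => hmin S (isSubnormalSub_iff_isSubnormal.mpr hS)
  have hperf : ⁅L, L⁆ = L := commutator_self_eq_self_of_ne_bot fun h => hnonab fun a ha b hb =>
    (mem_centralizer_iff.mp (commutator_eq_bot_iff_le_centralizer.mp h ha) b hb).symm
  refine ⟨fun h => hne (le_bot_iff.mp (le_normalClosure.trans h.le)), fun N hN hNL => ?_⟩
  by_cases hLN : L ≤ N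
  · exact .inr (le_antisymm hNL (normalClosure_le_normal hLN))
  · exact .inl (eq_bot_of_le_normalClosure_of_not_le hperf hL hN hNL hLN)
end

section
/- Let H, K and N be pairwise permutable subgroups of a finite group G (i.e., HK = KH, HN = NH, KN = NK), and suppose H is a Hall subgroup of G. Then N ∩ HK = (N ∩ H)(N ∩ K). -/
open Subgroup
open scoped Pointwise

/-!
Put `D = N ∩ HK`, a subgroup because `HK` is one. Two subgroups of `D` whose indices in `D`
are coprime have product `D`, by the product formula `|AB| = |A : A ∩ B| |B|`. Dedekind's law
gives `HN ∩ HK = DH` and `KN ∩ HK = DK = (KN ∩ H)K`, so `|D : N ∩ H| = |DH : H|` divides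
`|G : H|`, while `|D : N ∩ K| = |DK : K| = |KN ∩ H : K ∩ H|` divides `|H|`.
-/

namespace Subgroup

variable {G : Type*} [Group G]

theorem natCard_image_mk_eq_relIndex (A B : Subgroup G) :
    Nat.card ((A : Set G).image ((↑) : G → G ⧸ B)) = B.relIndex A := by
  have hsmul (a : A) (g : G) : a • (g : G ⧸ B) = ((a * g : G) : G ⧸ B) := rfl
  have hstab : MulAction.stabilizer A ((1 : G) : G ⧸ B) = B.subgroupOf A := by
    ext a; simp [hsmul, QuotientGroup.eq, mem_subgroupOf]
  have horbit : MulAction.orbit A ((1 : G) : G ⧸ B) = (A : Set G).image (↑) := by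
    ext q; simp [MulAction.mem_orbit_iff, hsmul]
  rw [relIndex, ← hstab, MulAction.index_stabilizer, horbit, Nat.card_coe_set_eq]

theorem natCard_coe_mul_coe (A B : Subgroup G) :
    Nat.card ((A : Set G) * B : Set G) = B.relIndex A * Nat.card B := by
  rw [card_mul_eq_card_subgroup_mul_card_quotient, natCard_image_mk_eq_relIndex, mul_comm]

theorem natCard_eq_relIndex_mul_natCard {A S : Subgroup G} (h : A ≤ S) :
    Nat.card S = A.relIndex S * Nat.card A := by
  rw [← (A.subgroupOf S).card_mul_index, mul_comm,
    Nat.card_congr (subgroupOfEquivOfLe h).toEquiv, relIndex]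

theorem relIndex_eq_relIndex_of_coe_eq_mul {A B S : Subgroup G} [Finite A]
    (hS : (S : Set G) = B * A) : A.relIndex S = A.relIndex B := by
  have hAS : A ≤ S := fun a ha => by
    rw [← SetLike.mem_coe, hS]; exact ⟨1, B.one_mem, a, ha, one_mul a⟩
  have hcard := natCard_eq_relIndex_mul_natCard hAS
  change Nat.card (S : Set G) = _ at hcard
  rw [hS, natCard_coe_mul_coe] at hcard
  exact (Nat.eq_of_mul_eq_mul_right Nat.card_pos hcard).symm

theorem coe_mul_eq_of_coprime_relIndex {A B D : Subgroup G} [Finite D] (hA : A ≤ D)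
    (hB : B ≤ D) (hAB : (A.relIndex D).Coprime (B.relIndex D)) : (A : Set G) * B = D := by
  have hsub : (A : Set G) * B ⊆ D :=
    Set.mul_subset_iff.mpr fun a ha b hb => D.mul_mem (hA ha) (hB hb)
  have hdvd : B.relIndex D ∣ B.relIndex A := by
    have h := relIndex_inf_mul_relIndex B A D
    rw [inf_of_le_left hA] at h
    exact hAB.symm.dvd_of_dvd_mul_right (h ▸ relIndex_dvd_of_le_left D inf_le_left)
  have : Finite A := Finite.of_injective _ (inclusion_injective hA)
  have hcard : Nat.card D ≤ Nat.card ((A : Set G) * B : Set G) := by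
    rw [natCard_coe_mul_coe, natCard_eq_relIndex_mul_natCard hB]
    exact Nat.mul_le_mul_right _
      (Nat.le_of_dvd (Nat.pos_of_ne_zero (B.subgroupOf A).index_ne_zero_of_finite) hdvd)
  exact Set.eq_of_subset_of_ncard_le hsub hcard (Set.toFinite _)

end Subgroup

namespace Permutes

variable {G : Type*} [Group G]

theorem symm {A B : Subgroup G} (h : Permutes A B) : Permutes B A :=
  Eq.symm h

theorem coe_sup {A B : Subgroup G} (h : Permutes A B) :
    ((A ⊔ B : Subgroup G) : Set G) = A * B := by
  let S : Subgroup G :=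
    { carrier := A * B
      one_mem' := ⟨1, A.one_mem, 1, B.one_mem, mul_one 1⟩
      mul_mem' := fun {x y} hx hy => by
        have hmul : (A : Set G) * B * (A * B) = A * B := by
          rw [mul_assoc, ← mul_assoc (B : Set G), ← h, mul_assoc, coe_mul_coe, ← mul_assoc,
            coe_mul_coe]
        exact hmul ▸ Set.mul_mem_mul hx hy
      inv_mem' := fun {x} hx => by
        have hinv : ((A : Set G) * B)⁻¹ = A * B := by
          rw [mul_inv_rev, inv_coe_set, inv_coe_set, h]
        exact hinv ▸ Set.inv_mem_inv.mpr hx }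
  have hS : A ⊔ B = S := by
    refine le_antisymm (sup_le (fun a ha => ⟨a, ha, 1, B.one_mem, mul_one a⟩)
      (fun b hb => ⟨1, A.one_mem, b, hb, one_mul b⟩)) ?_
    rintro _ ⟨a, ha, b, hb, rfl⟩
    exact mul_mem (mem_sup_left ha) (mem_sup_right hb)
  rw [hS]
  rfl

theorem relIndex_inf_inf_eq_relIndex_inf_sup {K L N : Subgroup G} [Finite K]
    (hKN : Permutes K N) (hKL : K ≤ L) :
    (N ⊓ K).relIndex (N ⊓ L) = K.relIndex (L ⊓ (N ⊔ K)) := by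
  have hS : ((L ⊓ (N ⊔ K) : Subgroup G) : Set G) = (N ⊓ L : Subgroup G) * K := by
    rw [inf_comm N L, inf_mul_assoc L N K hKL, ← hKN.symm.coe_sup, coe_inf]
  rw [relIndex_eq_relIndex_of_coe_eq_mul hS, ← inf_relIndex_right, ← inf_relIndex_right K,
    inf_right_comm, inf_left_idem, inf_comm]

theorem relIndex_inf_sup_dvd_index {H K N : Subgroup G} [Finite H] (hHN : Permutes H N) :
    (N ⊓ H).relIndex (N ⊓ (H ⊔ K)) ∣ H.index := by
  rw [hHN.relIndex_inf_inf_eq_relIndex_inf_sup le_sup_left]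
  exact relIndex_dvd_index_of_le (le_inf le_sup_left le_sup_right)

theorem relIndex_inf_sup_dvd_natCard {H K N : Subgroup G} [Finite K] (hHK : Permutes H K)
    (hKN : Permutes K N) : (N ⊓ K).relIndex (N ⊓ (H ⊔ K)) ∣ Nat.card H := by
  have hT :
      (((H ⊔ K) ⊓ (N ⊔ K) : Subgroup G) : Set G) = ((N ⊔ K) ⊓ H : Subgroup G) * K := by
    rw [inf_mul_assoc _ _ _ le_sup_right, ← hHK.coe_sup, coe_inf, Set.inter_comm]
  rw [hKN.relIndex_inf_inf_eq_relIndex_inf_sup le_sup_right,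
    relIndex_eq_relIndex_of_coe_eq_mul hT]
  exact (relIndex_dvd_card _ _).trans (card_dvd_of_le inf_le_right)

end Permutes

/-- If `H`, `K`, `N` are pairwise permutable subgroups of a finite group `G` and
`H` is a Hall subgroup of `G`, then `N ∩ HK = (N ∩ H)(N ∩ K)`. -/
theorem statement_2 {G : Type*} [Group G] [Finite G] (H K N : Subgroup G)
    (hHall : Nat.Coprime (Nat.card H) H.index)
    (hHK : Permutes H K) (hHN : Permutes H N) (hKN : Permutes K N) :
    (N : Set G) ∩ ((H : Set G) * (K : Set G)) =
      ((N ⊓ H : Subgroup G) : Set G) * ((N ⊓ K : Subgroup G) : Set G) := by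
  have hD : ((N ⊓ (H ⊔ K) : Subgroup G) : Set G) = (N : Set G) ∩ ((H : Set G) * K) := by
    rw [coe_inf, hHK.coe_sup]
  have hu := hHN.relIndex_inf_sup_dvd_index (K := K)
  have hv := hHK.relIndex_inf_sup_dvd_natCard hKN
  rw [← hD, coe_mul_eq_of_coprime_relIndex (inf_le_inf_left N le_sup_left)
    (inf_le_inf_left N le_sup_right) ((hHall.symm.coprime_dvd_left hu).coprime_dvd_right hv)]
end

section
/- Let σ be a partition of the primes, G a finite group, and A a σ-subnormal subgroup of G with A a σ_i-group for some block σ_i of σ. Then A ≤ O_{σ_i}(G), the largest normal σ_i-subgroup of G. -/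
open Subgroup
open scoped Pointwise

/-!
Write `O_{σ i}(B)` for the largest `σ i`-subgroup of `B` normalized by `B`. Along a σ-subnormal
chain `A = A₀ ≤ ⋯ ≤ Aₙ = G` these subgroups increase, so `A ≤ O_{σ i}(A) ≤ O_{σ i}(G)`.
For a normal step this is because `O_{σ i}(X)` is characteristic in `X`. Otherwise `Y / K` is a
`σ j`-group, where `K = X_Y`. If `j ≠ i`, then `O_{σ i}(X) ≤ K`, so it lies in `O_{σ i}(K)`,
which is normal in `Y`. If `j = i`, pass to `Y / O_{σ i}(K)`: there the image `N` of `K` has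
`O_{σ i}(N) = 1` and is centralized by the image of `O_{σ i}(X)`, since
`[O_{σ i}(X), K] ≤ O_{σ i}(X) ∩ K ≤ O_{σ i}(K)`. In `C = C(N)` the subgroup `N ∩ C` is central,
has no `σ i`-part and `σ i`-index, so by Schur–Zassenhaus it has a complement, which is normal
in `C` and contains every `σ i`-subgroup of `C`. Hence the image of `O_{σ i}(X)` lies in
`O_{σ i}(C)`, which is normal in `Y / O_{σ i}(K)`.
-/

section

variable {ι : Type*} {σ : ι → Set ℕ} {i : ι}

theorem IsPrimePartition.eq_of_mem (hσ : IsPrimePartition σ) {p : ℕ} (hp : p.Prime) {j : ι}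
    (hi : p ∈ σ i) (hj : p ∈ σ j) : i = j :=
  (hσ.existsUnique_mem p hp).unique hi hj

namespace IsSigmaNumber

theorem of_dvd {m n : ℕ} (hn : IsSigmaNumber σ i n) (hmn : m ∣ n) : IsSigmaNumber σ i m :=
  fun p hp hpm => hn p hp (hpm.trans hmn)

theorem mul {m n : ℕ} (hm : IsSigmaNumber σ i m) (hn : IsSigmaNumber σ i n) :
    IsSigmaNumber σ i (m * n) :=
  fun p hp hpmn => (hp.dvd_mul.mp hpmn).elim (hm p hp) (hn p hp)

theorem coprime {m n : ℕ} (hm : IsSigmaNumber σ i m) (hn : ∀ p : ℕ, p.Prime → p ∣ n → p ∉ σ i) :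
    m.Coprime n :=
  Nat.coprime_of_dvd fun p hp hpm hpn => hn p hp hpn (hm p hp hpm)

end IsSigmaNumber

namespace Subgroup

variable {G : Type*} [Group G]

theorem card_eq_card_mul_relIndex {H K : Subgroup G} (h : H ≤ K) :
    Nat.card K = Nat.card H * H.relIndex K := by
  rw [← (H.subgroupOf K).card_mul_index, relIndex,
    Nat.card_congr (subgroupOfEquivOfLe h).toEquiv]

theorem relIndex_sup_of_le_normalizer {H K : Subgroup G} (h : H ≤ normalizer K) :
    K.relIndex (H ⊔ K) = K.relIndex H := by
  have := normal_subgroupOf_of_le_normalizer h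
  have := normal_subgroupOf_sup_of_le_normalizer h
  exact Nat.card_congr (QuotientGroup.quotientInfEquivProdNormalizerQuotient H K h).toEquiv.symm

theorem card_comap_of_surjective {G' : Type*} [Group G'] {f : G →* G'}
    (hf : Function.Surjective f) (M : Subgroup G') :
    Nat.card (M.comap f) = Nat.card f.ker * Nat.card M := by
  rw [card_eq_card_mul_relIndex (ker_le_comap f M), relIndex_ker,
    map_comap_eq_self_of_surjective hf]

theorem le_of_coprime_card_index {E L : Subgroup G} [L.Normal]
    (h : (Nat.card E).Coprime L.index) : E ≤ L := by
  have hdvd : Nat.card (E.map (QuotientGroup.mk' L)) ∣ (Nat.card E).gcd L.index :=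
    Nat.dvd_gcd (card_map_dvd E _) (index_eq_card L ▸ card_subgroup_dvd_card _)
  rw [h, Nat.dvd_one, card_eq_one, ← le_bot_iff, map_le_iff_le_comap, MonoidHom.comap_bot,
    QuotientGroup.ker_mk'] at hdvd
  exact hdvd

theorem le_normalizer_of_le_centralizer {H K : Subgroup G} (h : H ≤ centralizer K) :
    K ≤ normalizer H :=
  le_normalizer_iff.mpr fun k hk x hx => by
    rwa [mem_centralizer_iff.mp (h hx) k hk, mul_inv_cancel_right]

end Subgroup

section SigmaSubgroups

variable {G : Type*} [Group G]

theorem IsSigmaIGroup.of_le {H K : Subgroup G} (hHK : H ≤ K)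
    (hK : IsSigmaIGroup σ i K) : IsSigmaIGroup σ i H :=
  IsSigmaNumber.of_dvd hK (card_dvd_of_le hHK)

theorem IsSigmaIGroup.map {G' : Type*} [Group G'] (f : G →* G') {H : Subgroup G}
    (hH : IsSigmaIGroup σ i H) : IsSigmaIGroup σ i (H.map f) :=
  IsSigmaNumber.of_dvd hH (card_map_dvd H f)

theorem IsSigmaIGroup.comap_of_injective {G' : Type*} [Group G'] {f : G →* G'}
    (hf : Function.Injective f) {H : Subgroup G'} (hH : IsSigmaIGroup σ i H) :
    IsSigmaIGroup σ i (H.comap f) :=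
  IsSigmaNumber.of_dvd hH (card_comap_dvd_of_injective H f hf)

theorem IsSigmaIGroup.comap_of_surjective {G' : Type*} [Group G'] {f : G →* G'}
    (hf : Function.Surjective f) (hker : IsSigmaIGroup σ i f.ker) {M : Subgroup G'}
    (hM : IsSigmaIGroup σ i M) : IsSigmaIGroup σ i (M.comap f) := by
  rw [IsSigmaIGroup, card_comap_of_surjective hf]
  exact hker.mul hM

theorem IsSigmaIGroup.sup {H K : Subgroup G} (h : H ≤ normalizer K) (hH : IsSigmaIGroup σ i H)
    (hK : IsSigmaIGroup σ i K) : IsSigmaIGroup σ i ↥(H ⊔ K) := by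
  rw [IsSigmaIGroup, card_eq_card_mul_relIndex le_sup_right, relIndex_sup_of_le_normalizer h]
  exact hK.mul (hH.of_dvd (relIndex_dvd_card _ _))

theorem prime_notMem_of_dvd_card [Finite G] {Z : Subgroup G}
    (hZ : ∀ M ≤ Z, IsSigmaIGroup σ i M → M = ⊥) {p : ℕ} (hp : p.Prime)
    (hpZ : p ∣ Nat.card Z) : p ∉ σ i := by
  intro hpi
  have : Fact p.Prime := ⟨hp⟩
  obtain ⟨z, hz⟩ := exists_prime_orderOf_dvd_card' p hpZ
  have hzp : Nat.card (zpowers (z : G)) = p := by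
    rw [Nat.card_zpowers, orderOf_submonoid, hz]
  have hbot := hZ (zpowers (z : G)) (zpowers_le.mpr z.2)
    (fun q hq hqp => by rw [hzp] at hqp; rwa [(Nat.prime_dvd_prime_iff_eq hq hp).mp hqp])
  rw [← card_eq_one, hzp] at hbot
  exact hp.one_lt.ne' hbot

end SigmaSubgroups

section SigmaCoreOf

variable (σ i) {G : Type*} [Group G]

/-- `O_{σ i}(B)`, computed inside the ambient group. -/
def sigmaCoreOf (B : Subgroup G) : Subgroup G :=
  sSup {N : Subgroup G | N ≤ B ∧ B ≤ normalizer N ∧ IsSigmaIGroup σ i N}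

variable {σ i}

theorem sigmaCoreOf_le (B : Subgroup G) : sigmaCoreOf σ i B ≤ B :=
  sSup_le fun _ hN => hN.1

theorem le_sigmaCoreOf {B N : Subgroup G} (hNB : N ≤ B) (hBN : B ≤ normalizer N)
    (hN : IsSigmaIGroup σ i N) : N ≤ sigmaCoreOf σ i B :=
  le_sSup ⟨hNB, hBN, hN⟩

theorem isSigmaIGroup_sigmaCoreOf [Finite G] (B : Subgroup G) :
    IsSigmaIGroup σ i (sigmaCoreOf σ i B) := by
  set S := {N : Subgroup G | N ≤ B ∧ B ≤ normalizer N ∧ IsSigmaIGroup σ i N}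
  have hS : SupClosed S := fun N₁ h₁ N₂ h₂ =>
    ⟨sup_le h₁.1 h₂.1,
      (le_inf h₁.2.1 h₂.2.1).trans (normalizer_inf_normalizer_le_normalizer_sup _ _),
      h₁.2.2.sup (h₁.1.trans h₂.2.1) h₂.2.2⟩
  have hbot : ⊥ ∈ S := ⟨bot_le, le_top.trans (normalizer_eq_top ⊥).ge, fun p hp hp1 => by
    simp [hp.ne_one] at hp1⟩
  exact (hS.sSup_mem S.toFinite hbot subset_rfl).2.2

theorem map_sigmaCoreOf_le {G' : Type*} [Group G'] (f : G →* G') (B : Subgroup G) :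
    (sigmaCoreOf σ i B).map f ≤ sigmaCoreOf σ i (B.map f) := by
  rw [sigmaCoreOf, (gc_map_comap f).l_sSup]
  exact iSup₂_le fun N hN => le_sigmaCoreOf (map_mono hN.1)
    ((map_mono hN.2.1).trans (le_normalizer_map f)) (hN.2.2.map f)

theorem normalizer_le_normalizer_sigmaCoreOf (B : Subgroup G) :
    normalizer (B : Set G) ≤ normalizer (sigmaCoreOf σ i B : Set G) :=
  le_normalizer_iff.mpr fun g hg x hx => by
    have := map_sigmaCoreOf_le (σ := σ) (i := i) (MulAut.conj g : G →* G) B ⟨x, hx, rfl⟩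
    rwa [mem_normalizer_iff_map_conj_eq.mp hg] at this

theorem le_normalizer_sigmaCoreOf (B : Subgroup G) :
    B ≤ normalizer (sigmaCoreOf σ i B : Set G) :=
  le_normalizer.trans (normalizer_le_normalizer_sigmaCoreOf B)

theorem comap_sigmaCoreOf_le [Finite G] {G' : Type*} [Group G'] {f : G' →* G}
    (hf : Function.Injective f) (B : Subgroup G) :
    (sigmaCoreOf σ i B).comap f ≤ sigmaCoreOf σ i (B.comap f) :=
  le_sigmaCoreOf (comap_mono (sigmaCoreOf_le B))
    ((comap_mono (le_normalizer_sigmaCoreOf B)).trans (le_normalizer_comap f))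
    ((isSigmaIGroup_sigmaCoreOf B).comap_of_injective hf)

instance sigmaCoreOf_normal (B : Subgroup G) [B.Normal] : (sigmaCoreOf σ i B).Normal :=
  normalizer_eq_top_iff.mp <| top_le_iff.mp <|
    (normalizer_eq_top B).ge.trans (normalizer_le_normalizer_sigmaCoreOf B)

theorem sigmaCoreOf_le_sigmaCoreOf [Finite G] {X Y : Subgroup G} (hXY : X ≤ Y)
    (hY : Y ≤ normalizer (X : Set G)) : sigmaCoreOf σ i X ≤ sigmaCoreOf σ i Y :=
  le_sigmaCoreOf ((sigmaCoreOf_le X).trans hXY)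
    (hY.trans (normalizer_le_normalizer_sigmaCoreOf X)) (isSigmaIGroup_sigmaCoreOf X)

theorem sigmaCoreOf_top_le_sigmaCore [Finite G] : sigmaCoreOf σ i ⊤ ≤ sigmaCore σ i G :=
  le_sSup ⟨inferInstance, isSigmaIGroup_sigmaCoreOf ⊤⟩

end SigmaCoreOf

section Centralizer

variable {G : Type*} [Group G]

theorem Subgroup.normal_of_le_center {Z : Subgroup G} (hZ : Z ≤ center G) : Z.Normal :=
  ⟨fun z hz g => by rwa [mem_center_iff.mp (hZ hz) g, mul_inv_cancel_right]⟩

theorem le_sigmaCoreOf_top_of_le_center [Finite G] {Z : Subgroup G} (hZ : Z ≤ center G)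
    (hZσ : ∀ p : ℕ, p.Prime → p ∣ Nat.card Z → p ∉ σ i) (hindex : IsSigmaNumber σ i Z.index)
    {E : Subgroup G} (hE : IsSigmaIGroup σ i E) : E ≤ sigmaCoreOf σ i ⊤ := by
  have := normal_of_le_center hZ
  obtain ⟨L, hZL⟩ := exists_right_complement'_of_coprime (hindex.coprime hZσ).symm
  have : L.Normal := normalizer_eq_top_iff.mp <| top_le_iff.mp <| hZL.sup_eq_top.ge.trans <|
    sup_le (hZ.trans (center_le_normalizer _)) le_normalizer
  have hEL : E ≤ L := le_of_coprime_card_index <| by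
    rw [hZL.index_eq_card]
    exact hE.coprime hZσ
  refine hEL.trans (le_sigmaCoreOf le_top (normalizer_eq_top L).ge ?_)
  rw [IsSigmaIGroup, ← hZL.symm.index_eq_card]
  exact hindex

theorem le_sigmaCoreOf_top_of_le_centralizer [Finite G] {N : Subgroup G} [N.Normal]
    (hN : sigmaCoreOf σ i N = ⊥) (hindex : IsSigmaNumber σ i N.index) {E : Subgroup G}
    (hEN : E ≤ centralizer (N : Set G)) (hE : IsSigmaIGroup σ i E) : E ≤ sigmaCoreOf σ i ⊤ := by
  set C := centralizer (N : Set G)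
  have hZ : N.subgroupOf C ≤ center C := fun z hz =>
    mem_center_iff.mpr fun c => Subtype.ext (mem_centralizer_iff.mp c.2 z hz).symm
  have hZσ : ∀ M ≤ N.subgroupOf C, IsSigmaIGroup σ i M → M = ⊥ := fun M hMZ hM => by
    have hMN : M.map C.subtype ≤ N :=
      (map_mono hMZ).trans ((subgroupOf_map_subtype N C).trans_le inf_le_left)
    have := le_sigmaCoreOf hMN (le_normalizer_of_le_centralizer (map_subtype_le M))
      (hM.map C.subtype)
    rwa [hN, le_bot_iff, map_eq_bot_iff_of_injective _ C.subtype_injective] at this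
  have hEC : E.subgroupOf C ≤ sigmaCoreOf σ i ⊤ :=
    le_sigmaCoreOf_top_of_le_center hZ (fun p hp => prime_notMem_of_dvd_card hZσ hp)
      (hindex.of_dvd (relIndex_dvd_index_of_normal N C))
      (hE.comap_of_injective C.subtype_injective)
  calc E = (E.subgroupOf C).map C.subtype := by rw [subgroupOf_map_subtype, inf_eq_left.mpr hEN]
    _ ≤ sigmaCoreOf σ i ((⊤ : Subgroup C).map C.subtype) :=
      (map_mono hEC).trans (map_sigmaCoreOf_le _ _)
    _ ≤ sigmaCoreOf σ i ⊤ := by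
      rw [← MonoidHom.range_eq_map, range_subtype]
      exact sigmaCoreOf_le_sigmaCoreOf le_top (normalizer_eq_top C).ge

end Centralizer

section Quotient

variable {G : Type*} [Group G] [Finite G]

theorem commutator_sigmaCoreOf_le {X K : Subgroup G} [K.Normal] (hKX : K ≤ X) :
    ⁅sigmaCoreOf σ i X, K⁆ ≤ sigmaCoreOf σ i K := by
  set D := sigmaCoreOf σ i X
  have hKD : K ≤ normalizer (D : Set G) := hKX.trans (le_normalizer_sigmaCoreOf X)
  have hDK : ⁅D, K⁆ ≤ D ⊓ K := commutator_le.mpr fun d hd k hk => by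
    rw [commutatorElement_def]
    refine mem_inf.mpr ⟨?_, mul_mem (Normal.conj_mem ‹_› k hk d) (inv_mem hk)⟩
    rw [mul_assoc d, mul_assoc d]
    exact mul_mem hd (le_normalizer_iff.mp hKD k hk _ (inv_mem hd))
  exact hDK.trans <| le_sigmaCoreOf inf_le_right
    ((le_inf hKD le_normalizer).trans inf_normalizer_le_normalizer_inf)
    ((isSigmaIGroup_sigmaCoreOf X).of_le inf_le_left)

theorem sigmaCoreOf_map_mk_sigmaCoreOf_eq_bot (K : Subgroup G) [K.Normal] :
    sigmaCoreOf σ i (K.map (QuotientGroup.mk' (sigmaCoreOf σ i K))) = ⊥ := by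
  set T := sigmaCoreOf σ i K
  set f := QuotientGroup.mk' T
  set M := sigmaCoreOf σ i (K.map f)
  have hMK : M.comap f ≤ K := (comap_mono (sigmaCoreOf_le _)).trans <| by
    rw [comap_map_eq, QuotientGroup.ker_mk']
    exact sup_le le_rfl (sigmaCoreOf_le K)
  have hKM : K ≤ normalizer (M.comap f : Set G) := (le_comap_map f K).trans <|
    (comap_mono (le_normalizer_sigmaCoreOf _)).trans (le_normalizer_comap f)
  have hT : IsSigmaIGroup σ i f.ker := by
    rw [QuotientGroup.ker_mk']; exact isSigmaIGroup_sigmaCoreOf K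
  have hMT : M.comap f ≤ T := le_sigmaCoreOf hMK hKM <|
    IsSigmaIGroup.comap_of_surjective (QuotientGroup.mk'_surjective T) hT
      (isSigmaIGroup_sigmaCoreOf _)
  rw [← le_bot_iff, ← QuotientGroup.map_mk'_self T,
    ← map_comap_eq_self_of_surjective (QuotientGroup.mk'_surjective T) M]
  exact map_mono hMT

theorem sigmaCoreOf_le_top_of_isSigmaNumber_index {X K : Subgroup G} [K.Normal] (hKX : K ≤ X)
    (hindex : IsSigmaNumber σ i K.index) : sigmaCoreOf σ i X ≤ sigmaCoreOf σ i ⊤ := by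
  set T := sigmaCoreOf σ i K
  set f := QuotientGroup.mk' T
  have hf : Function.Surjective f := QuotientGroup.mk'_surjective T
  have hT : IsSigmaIGroup σ i f.ker := by
    rw [QuotientGroup.ker_mk']; exact isSigmaIGroup_sigmaCoreOf K
  have : (K.map f).Normal := Normal.map ‹_› f hf
  have hcomm : (sigmaCoreOf σ i X).map f ≤ centralizer (K.map f : Set (G ⧸ T)) := by
    rw [← commutator_eq_bot_iff_le_centralizer, ← map_commutator, ← le_bot_iff,
      ← QuotientGroup.map_mk'_self T]
    exact map_mono (commutator_sigmaCoreOf_le hKX)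
  have hNindex : IsSigmaNumber σ i (K.map f).index := by
    rwa [index_map_eq K hf (by rw [QuotientGroup.ker_mk']; exact sigmaCoreOf_le K)]
  have hE : (sigmaCoreOf σ i X).map f ≤ sigmaCoreOf σ i ⊤ :=
    le_sigmaCoreOf_top_of_le_centralizer (sigmaCoreOf_map_mk_sigmaCoreOf_eq_bot K) hNindex hcomm
      ((isSigmaIGroup_sigmaCoreOf X).map f)
  calc sigmaCoreOf σ i X ≤ (sigmaCoreOf σ i ⊤).comap f := map_le_iff_le_comap.mp hE
    _ ≤ sigmaCoreOf σ i ⊤ := le_sigmaCoreOf le_top (normalizer_eq_top _).ge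
      (IsSigmaIGroup.comap_of_surjective hf hT (isSigmaIGroup_sigmaCoreOf ⊤))

end Quotient

section Subnormal

variable {G : Type*} [Group G] [Finite G]

theorem sigmaCoreOf_le_top_of_isSigmaPrimary (hσ : IsPrimePartition σ) (X : Subgroup G)
    (h : IsSigmaPrimary σ (G ⧸ X.normalCore)) : sigmaCoreOf σ i X ≤ sigmaCoreOf σ i ⊤ := by
  obtain ⟨j, hj⟩ := h
  rw [IsSigmaIGroup, ← index_eq_card] at hj
  have hKX := X.normalCore_le
  by_cases hij : i = j
  · subst hij
    exact sigmaCoreOf_le_top_of_isSigmaNumber_index hKX hj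
  · have hD : sigmaCoreOf σ i X ≤ X.normalCore := le_of_coprime_card_index <|
      (isSigmaIGroup_sigmaCoreOf X).coprime fun p hp hpj hpi =>
        hij (hσ.eq_of_mem hp hpi (hj p hp hpj))
    calc sigmaCoreOf σ i X ≤ sigmaCoreOf σ i X.normalCore :=
          le_sigmaCoreOf hD (hKX.trans (le_normalizer_sigmaCoreOf X))
            (isSigmaIGroup_sigmaCoreOf X)
      _ ≤ sigmaCoreOf σ i ⊤ := sigmaCoreOf_le_sigmaCoreOf le_top (normalizer_eq_top _).ge

theorem SigmaSubnormalStep.sigmaCoreOf_mono (hσ : IsPrimePartition σ) {X Y : Subgroup G}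
    (h : SigmaSubnormalStep σ X Y) : sigmaCoreOf σ i X ≤ sigmaCoreOf σ i Y := by
  obtain ⟨hXY, hnormal | hprimary⟩ := h
  · exact sigmaCoreOf_le_sigmaCoreOf hXY ((normal_subgroupOf_iff_le_normalizer hXY).mp hnormal)
  · calc sigmaCoreOf σ i X = ((sigmaCoreOf σ i X).comap Y.subtype).map Y.subtype :=
          (map_comap_eq_self <| by
            rw [range_subtype]; exact (sigmaCoreOf_le X).trans hXY).symm
      _ ≤ (sigmaCoreOf σ i (X.subgroupOf Y)).map Y.subtype :=
          map_mono (comap_sigmaCoreOf_le Y.subtype_injective X)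
      _ ≤ (sigmaCoreOf σ i ⊤).map Y.subtype :=
          map_mono (sigmaCoreOf_le_top_of_isSigmaPrimary hσ _ hprimary)
      _ ≤ sigmaCoreOf σ i ((⊤ : Subgroup Y).map Y.subtype) := map_sigmaCoreOf_le _ _
      _ = sigmaCoreOf σ i Y := by rw [← MonoidHom.range_eq_map, range_subtype]

theorem IsSigmaSubnormal.sigmaCoreOf_le_top (hσ : IsPrimePartition σ) {A : Subgroup G}
    (hA : IsSigmaSubnormal σ A) : sigmaCoreOf σ i A ≤ sigmaCoreOf σ i ⊤ := by
  obtain ⟨n, C, rfl, hlast, hstep⟩ := hA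
  rw [← hlast]
  suffices ∀ k : Fin (n + 1), sigmaCoreOf σ i (C 0) ≤ sigmaCoreOf σ i (C k) from this (Fin.last n)
  intro k
  induction k using Fin.induction with
  | zero => exact le_rfl
  | succ k ih => exact ih.trans ((hstep k).sigmaCoreOf_mono hσ)

end Subnormal

end

/-- A σ-subnormal `σ i`-subgroup of a finite group lies in `O_{σ i}(G)`. -/
theorem statement_5 {ι : Type*} (σ : ι → Set ℕ) (hσ : IsPrimePartition σ)
    {G : Type*} [Group G] [Finite G] (A : Subgroup G) (i : ι)
    (hA : IsSigmaSubnormal σ A) (hAi : IsSigmaIGroup σ i ↥A) :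
    A ≤ sigmaCore σ i G :=
  calc A ≤ sigmaCoreOf σ i A := le_sigmaCoreOf le_rfl le_normalizer hAi
    _ ≤ sigmaCoreOf σ i ⊤ := hA.sigmaCoreOf_le_top hσ
    _ ≤ sigmaCore σ i G := sigmaCoreOf_top_le_sigmaCore
end

section
/- Let σ be a partition of the primes and A a σ-subnormal subgroup of a finite group G which is also a Hall σ_i-subgroup of G for some i. Then A is normal in G. -/
open Subgroup
open scoped Pointwise

/-!
Walk up a σ-subnormal chain `A = C₀ ≤ ⋯ ≤ Cₙ = G`, keeping `A ⊴ Cₖ`. A normal Hall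
`σᵢ`-subgroup of `B` consists exactly of the elements of `B` of `σᵢ`-order, so `A ⊴ C` as soon
as every `C`-conjugate of `A` lies in `B`. This holds when `B ⊴ C`, and also when `C/B_C`
(`B_C` the core of `B` in `C`) is a `σⱼ`-group with `j ≠ i`, because then `A ≤ B_C`. If instead
`C/B_C` is a `σᵢ`-group, then `|C : B|` is a `σᵢ`-number dividing the `σᵢ'`-number `|G : A|`,
so `B = C`.
-/

section

variable {ι : Type*} {σ : ι → Set ℕ} {i j : ι} {G : Type*} [Group G] {A B C : Subgroup G}

lemma IsSigmaNumber.of_dvd_s6 {m n : ℕ} (h : IsSigmaNumber σ i n) (hmn : m ∣ n) :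
    IsSigmaNumber σ i m :=
  fun p hp hpm => h p hp (hpm.trans hmn)

lemma IsSigmaNumber.coprime_of_forall_not_mem {m n : ℕ} (h : IsSigmaNumber σ i n)
    (hm : ∀ p : ℕ, p.Prime → p ∣ m → p ∉ σ i) : n.Coprime m :=
  Nat.coprime_of_dvd fun p hp hpn hpm => hm p hp hpm (h p hp hpn)

lemma IsPrimePartition.coprime_of_ne (hσ : IsPrimePartition σ) {m n : ℕ}
    (hn : IsSigmaNumber σ i n) (hm : IsSigmaNumber σ j m) (hij : i ≠ j) : n.Coprime m := by
  refine hn.coprime_of_forall_not_mem fun p hp hpm hpi => hij ?_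
  obtain ⟨k, -, hk⟩ := hσ.existsUnique_mem p hp
  rw [hk i hpi, hk j (hm p hp hpm)]

lemma QuotientGroup.mem_of_coprime_orderOf {H : Type*} [Group H] {N : Subgroup H} [N.Normal]
    {x : H} (hx : (orderOf x).Coprime (Nat.card (H ⧸ N))) : x ∈ N := by
  rw [← QuotientGroup.eq_one_iff, ← orderOf_eq_one_iff]
  exact (hx.coprime_dvd_left (orderOf_map_dvd (QuotientGroup.mk' N) x)).eq_one_of_dvd
    (orderOf_dvd_natCard _)

lemma IsHallSigmaI.isSigmaNumber_orderOf (hA : IsHallSigmaI σ i A) {a : G} (ha : a ∈ A) :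
    IsSigmaNumber σ i (orderOf a) := by
  refine hA.1.of_dvd_s6 ?_
  simpa only [Subgroup.orderOf_mk] using orderOf_dvd_natCard (⟨a, ha⟩ : A)

lemma IsHallSigmaI.mem_of_isSigmaNumber_orderOf (hA : IsHallSigmaI σ i A) (hAB : A ≤ B)
    [(A.subgroupOf B).Normal] {b : G} (hb : b ∈ B) (hord : IsSigmaNumber σ i (orderOf b)) :
    b ∈ A := by
  have hcop : (orderOf b).Coprime (A.relIndex B) := hord.coprime_of_forall_not_mem
    fun p hp hpd => hA.2 p hp (hpd.trans (relIndex_dvd_index_of_le hAB))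
  rw [← Subgroup.orderOf_mk b hb, relIndex, index_eq_card] at hcop
  exact mem_subgroupOf.mp (QuotientGroup.mem_of_coprime_orderOf hcop)

lemma IsHallSigmaI.normal_subgroupOf_of_conj_mem (hA : IsHallSigmaI σ i A) (hAB : A ≤ B)
    [(A.subgroupOf B).Normal] (hAC : A ≤ C) (hconj : ∀ x ∈ A, ∀ g ∈ C, g * x * g⁻¹ ∈ B) :
    (A.subgroupOf C).Normal := by
  refine (normal_subgroupOf_iff hAC).mpr fun x g hx hg => ?_
  refine hA.mem_of_isSigmaNumber_orderOf hAB (hconj x hx g hg) ?_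
  rw [← MulAut.conj_apply, MulEquiv.orderOf_eq]
  exact hA.isSigmaNumber_orderOf hx

lemma IsHallSigmaI.eq_of_le_of_isSigmaIGroup_quotient (hA : IsHallSigmaI σ i A) (hAB : A ≤ B)
    (hBC : B ≤ C) {N : Subgroup C} [N.Normal] (hNB : N ≤ B.subgroupOf C)
    (hN : IsSigmaIGroup σ i (C ⧸ N)) : B = C := by
  have hBN : IsSigmaNumber σ i (B.relIndex C) := by
    refine hN.of_dvd_s6 ?_
    rw [relIndex, ← index_eq_card]
    exact index_dvd_of_le hNB
  have hdvd : B.relIndex C ∣ A.index :=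
    (Dvd.intro_left _ (relIndex_mul_relIndex A B C hAB hBC)).trans
      (relIndex_dvd_index_of_le (hAB.trans hBC))
  have hone := (hBN.coprime_of_forall_not_mem hA.2).eq_one_of_dvd hdvd
  exact le_antisymm hBC (relIndex_eq_one.mp hone)

lemma IsHallSigmaI.normal_subgroupOf_of_sigmaSubnormalStep (hσ : IsPrimePartition σ)
    (hA : IsHallSigmaI σ i A) (hAB : A ≤ B) (hAn : (A.subgroupOf B).Normal)
    (hstep : SigmaSubnormalStep σ B C) : A ≤ C ∧ (A.subgroupOf C).Normal := by
  obtain ⟨hBC, hBn | ⟨j, hj⟩⟩ := hstep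
  · refine ⟨hAB.trans hBC, hA.normal_subgroupOf_of_conj_mem hAB (hAB.trans hBC) ?_⟩
    exact fun x hx g hg => (normal_subgroupOf_iff hBC).mp hBn x g (hAB hx) hg
  obtain rfl | hji := eq_or_ne j i
  · obtain rfl := hA.eq_of_le_of_isSigmaIGroup_quotient hAB hBC (normalCore_le _) hj
    exact ⟨hAB, hAn⟩
  refine ⟨hAB.trans hBC, hA.normal_subgroupOf_of_conj_mem hAB (hAB.trans hBC) fun x hx g hg => ?_⟩
  set N := (B.subgroupOf C).normalCore
  have hxN : (⟨x, hAB.trans hBC hx⟩ : C) ∈ N := by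
    refine QuotientGroup.mem_of_coprime_orderOf ?_
    rw [Subgroup.orderOf_mk]
    exact hσ.coprime_of_ne (hA.isSigmaNumber_orderOf hx) hj hji.symm
  exact mem_subgroupOf.mp (normalCore_le _ ((normalCore_normal _).conj_mem _ hxN ⟨g, hg⟩))

end

theorem statement_6_general {ι : Type*} (σ : ι → Set ℕ) (hσ : IsPrimePartition σ)
    {G : Type*} [Group G] (A : Subgroup G) (i : ι)
    (hA : IsSigmaSubnormal σ A) (hHall : IsHallSigmaI σ i A) :
    A.Normal := by
  obtain ⟨n, C, hC0, hCn, hstep⟩ := hA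
  have hchain : ∀ k, A ≤ C k ∧ (A.subgroupOf (C k)).Normal := by
    refine Fin.induction ⟨hC0.ge, ?_⟩ fun k ih =>
      hHall.normal_subgroupOf_of_sigmaSubnormalStep hσ ih.1 ih.2 (hstep k)
    rw [hC0, subgroupOf_self]
    infer_instance
  obtain ⟨-, hAG⟩ := hchain (Fin.last n)
  rw [hCn] at hAG
  exact ⟨fun x hx g => (normal_subgroupOf_iff le_top).mp hAG x g hx (mem_top g)⟩

/-- A σ-subnormal Hall `σ i`-subgroup of a finite group is normal. -/
theorem statement_6 {ι : Type*} (σ : ι → Set ℕ) (hσ : IsPrimePartition σ)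
    {G : Type*} [Group G] [Finite G] (A : Subgroup G) (i : ι)
    (hA : IsSigmaSubnormal σ A) (hHall : IsHallSigmaI σ i A) :
    A.Normal :=
  statement_6_general σ hσ A i hA hHall
end

section
/- Let σ be a partition of the primes and let G be a finite σ-SC-group whose σ-soluble residual equals its σ-supersoluble residual: G^{𝔖_σ} = G^{𝔘_σ}. Then G^{𝔖_σ} centralizes G_𝔖 ∩ G^{𝔑_σ}, where G_𝔖 is the soluble radical of G. -/
open Subgroup
open scoped Pointwise

/-!
The σ-soluble residual lies in the perfect core `T = G^(k)` of `G`, since a finite soluble group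
is σ-soluble (its chief factors are elementary abelian `p`-groups). A chief factor `H/K` of `G`
below `G_𝔖 ∩ G^{𝔑_σ}` is simple (σ-SC) and soluble, so cyclic; `G` acts on it through the abelian
group `Aut(H/K)`, hence `G'` acts trivially. Climbing a chief series of `G_𝔖 ∩ G^{𝔑_σ}`, the three
subgroup lemma then shows that `T = [T, T]` centralizes each term: if `T` centralizes `K` and
`[T, H] ≤ K`, then `[[T, T], H] = 1`.
-/

namespace Subgroup

variable {G : Type*} [Group G]

theorem sInf_normal (Hs : Set (Subgroup G)) (h : ∀ H ∈ Hs, H.Normal) : (sInf Hs).Normal :=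
  ⟨fun n hn g => mem_sInf.2 fun H hH => (h H hH).conj_mem n (mem_sInf.1 hn H hH) g⟩

theorem isSolvable_sup_of_normal {A B : Subgroup G} [A.Normal] [Group.IsSolvable A]
    [Group.IsSolvable B] : Group.IsSolvable ↥(A ⊔ B) := by
  rw [sup_comm]
  have hA : Group.IsSolvable (A.subgroupOf (B ⊔ A)) :=
    Group.isSolvable_of_isSolvable_injective
      (f := (subgroupOfEquivOfLe le_sup_right).toMonoidHom) (MulEquiv.injective _)
  have hQ : Group.IsSolvable (↥(B ⊔ A) ⧸ A.subgroupOf (B ⊔ A)) :=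
    Group.isSolvable_of_surjective
      (f := (QuotientGroup.quotientInfEquivProdNormalQuotient B A).toMonoidHom)
      (MulEquiv.surjective _)
  exact (Group.isSolvable_iff_subgroup_quotient _).2 ⟨hA, hQ⟩

noncomputable def quotientSubgroupOfEquivMap (M N : Subgroup G) [M.Normal] :
    N ⧸ M.subgroupOf N ≃* N.map (QuotientGroup.mk' M) :=
  (QuotientGroup.quotientMulEquivOfEq (by
      ext x
      rw [mem_subgroupOf, MonoidHom.mem_ker, ← Subtype.coe_inj]
      exact (QuotientGroup.eq_one_iff _).symm)).trans
    (QuotientGroup.quotientKerEquivOfSurjective _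
      ((QuotientGroup.mk' M).subgroupMap_surjective N))

theorem commutator_le_centralizer_of_isCyclic (N : Subgroup G) [N.Normal] [IsCyclic N] :
    _root_.commutator G ≤ centralizer (N : Set G) := by
  intro g hg
  have hker := Abelianization.commutator_subset_ker
    ((IsCyclic.mulAutMulEquiv N).toMonoidHom.comp MulAut.conjNormal) hg
  rw [MonoidHom.mem_ker, MonoidHom.comp_apply, MulEquiv.coe_toMonoidHom,
    MulEquiv.map_eq_one_iff] at hker
  rw [mem_centralizer_iff]
  intro x hx
  have := congrArg Subtype.val (DFunLike.congr_fun hker ⟨x, hx⟩)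
  rw [MulAut.conjNormal_apply, mul_inv_eq_iff_eq_mul] at this
  exact this.symm

theorem commutator_commutator_eq_bot_of_commutator_le {A M N : Subgroup G}
    (hAN : ⁅A, N⁆ ≤ M) (hMA : ⁅M, A⁆ = ⊥) : ⁅⁅A, A⁆, N⁆ = ⊥ := by
  have hANA : ⁅⁅A, N⁆, A⁆ = ⊥ := le_bot_iff.1 ((commutator_mono hAN le_rfl).trans hMA.le)
  exact commutator_commutator_eq_bot_of_rotate hANA (by rwa [commutator_comm N A])

theorem le_centralizer_of_isCyclic_quotient {M N T : Subgroup G} [M.Normal] [N.Normal]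
    [IsCyclic (N ⧸ M.subgroupOf N)] (hT : ⁅T, T⁆ = T) (hTM : T ≤ centralizer (M : Set G)) :
    T ≤ centralizer (N : Set G) := by
  set f := QuotientGroup.mk' M
  have hf : Function.Surjective f := QuotientGroup.mk'_surjective M
  have : (N.map f).Normal := Normal.map inferInstance f hf
  have : IsCyclic (N.map f) :=
    isCyclic_of_surjective (quotientSubgroupOfEquivMap M N).toMonoidHom (MulEquiv.surjective _)
  set A := centralizer (M : Set G) ⊓ (centralizer (N.map f : Set (G ⧸ M))).comap f
  have hAN : ⁅A, N⁆ ≤ M := by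
    rw [← QuotientGroup.ker_mk' M, ← map_eq_bot_iff, map_commutator,
      commutator_eq_bot_iff_le_centralizer]
    exact (map_mono inf_le_right).trans (map_comap_le _ _)
  have hMA : ⁅M, A⁆ = ⊥ := by
    rw [commutator_comm, commutator_eq_bot_iff_le_centralizer]
    exact inf_le_left
  have hTA : T ≤ A := by
    refine le_inf hTM ?_
    rw [← hT, ← map_le_iff_le_comap, map_commutator]
    calc ⁅T.map f, T.map f⁆ ≤ _root_.commutator (G ⧸ M) := commutator_mono le_top le_top
      _ ≤ _ := commutator_le_centralizer_of_isCyclic (N.map f)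
  rw [← commutator_eq_bot_iff_le_centralizer, ← le_bot_iff, ← hT,
    ← commutator_commutator_eq_bot_of_commutator_le hAN hMA]
  exact commutator_mono (commutator_mono hTA hTA) le_rfl

end Subgroup

namespace IsChiefFactor

variable {G : Type*} [Group G]

theorem map_mk' {K H : Subgroup G} [K.Normal] (hc : IsChiefFactor G K H) :
    IsChiefFactor (G ⧸ K) ⊥ (H.map (QuotientGroup.mk' K)) := by
  obtain ⟨-, hH, hKH, hmin⟩ := hc
  have hf := QuotientGroup.mk'_surjective K
  refine ⟨inferInstance, hH.map _ hf, ?_, fun L hL _ hLH => ?_⟩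
  · rw [bot_lt_iff_ne_bot, Ne, Subgroup.map_eq_bot_iff, QuotientGroup.ker_mk']
    exact hKH.not_ge
  · have hKL : K ≤ L.comap (QuotientGroup.mk' K) :=
      (QuotientGroup.ker_mk' K).ge.trans (MonoidHom.ker_le_comap _ L)
    have hLH' : L.comap (QuotientGroup.mk' K) ≤ H := by
      simpa [Subgroup.comap_map_eq, hKH.le] using
        Subgroup.comap_mono (f := QuotientGroup.mk' K) hLH
    rw [← Subgroup.map_comap_eq_self_of_surjective hf L]
    rcases hmin _ (hL.comap _) hKL hLH' with h | h <;> rw [h]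
    · left; simp
    · right; rfl

theorem commutator_eq_bot [Group.IsSolvable G] {H : Subgroup G} (hc : IsChiefFactor G ⊥ H) :
    ⁅H, H⁆ = ⊥ := by
  have : H.Normal := hc.2.1
  refine (hc.2.2.2 _ inferInstance bot_le (Subgroup.commutator_le_self H)).resolve_right
    (Group.IsSolvable.commutator_lt_of_ne_bot hc.2.2.1.ne').ne

/-- The elements of order dividing `p` form a normal subgroup of `G` inside `H`, hence all of `H`
by minimality. -/
theorem eq_of_prime_dvd_card [Finite G] {H : Subgroup G} (hc : IsChiefFactor G ⊥ H)
    (hab : ⁅H, H⁆ = ⊥) {p r : ℕ} [Fact p.Prime] [Fact r.Prime] (hp : p ∣ Nat.card H)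
    (hr : r ∣ Nat.card H) : r = p := by
  have hcomm : ∀ x ∈ H, ∀ y ∈ H, Commute x y := fun x hx y hy =>
    (Subgroup.mem_centralizer_iff.1
      (Subgroup.commutator_eq_bot_iff_le_centralizer.1 hab hx) y hy).symm
  let L : Subgroup G :=
    { carrier := {x | x ∈ H ∧ x ^ p = 1}
      one_mem' := ⟨H.one_mem, one_pow p⟩
      mul_mem' := fun ha hb =>
        ⟨H.mul_mem ha.1 hb.1, by rw [(hcomm _ ha.1 _ hb.1).mul_pow, ha.2, hb.2, one_mul]⟩
      inv_mem' := fun ha => ⟨H.inv_mem ha.1, by rw [inv_pow, ha.2, inv_one]⟩ }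
  have hL : L.Normal := ⟨fun x hx g => ⟨hc.2.1.conj_mem x hx.1 g, by rw [conj_pow, hx.2]; group⟩⟩
  obtain ⟨x, hx⟩ := exists_prime_orderOf_dvd_card' p hp
  have hLH : L = H := by
    refine (hc.2.2.2 L hL bot_le fun y hy => hy.1).resolve_left fun hbot => ?_
    have hxL : (x : G) ∈ L := ⟨x.2, by rw [← Subgroup.coe_pow, ← hx, pow_orderOf_eq_one]; rfl⟩
    rw [hbot, Subgroup.mem_bot, OneMemClass.coe_eq_one] at hxL
    exact (Fact.out : p.Prime).ne_one (hx ▸ orderOf_eq_one_iff.2 hxL)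
  obtain ⟨z, hz⟩ := exists_prime_orderOf_dvd_card' r hr
  have hzL : (z : G) ∈ L := by rw [hLH]; exact z.2
  have hzp : z ^ p = 1 := Subtype.ext hzL.2
  exact (Nat.prime_dvd_prime_iff_eq Fact.out Fact.out).1 (hz ▸ orderOf_dvd_of_pow_eq_one hzp)

end IsChiefFactor

theorem IsSimpleGroup.isCyclic_of_isSolvable (Q : Type*) [Group Q] [IsSimpleGroup Q]
    [Group.IsSolvable Q] : IsCyclic Q :=
  letI : CommGroup Q := { mul_comm := IsSimpleGroup.comm_iff_isSolvable.2 ‹_› }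
  IsSimpleGroup.isCyclic

theorem exists_isChiefFactor_of_ne_bot {G : Type*} [Group G] [Finite G] {N : Subgroup G}
    (hN : N.Normal) (hN₀ : N ≠ ⊥) : ∃ M, IsChiefFactor G M N := by
  obtain ⟨M, ⟨hM, hMN⟩, hmax⟩ := Set.Finite.exists_maximal (s := {M | M.Normal ∧ M < N})
    (Set.toFinite _) ⟨⊥, Subgroup.normal_bot, bot_lt_iff_ne_bot.2 hN₀⟩
  refine ⟨M, hM, hN, hMN, fun L hL hML hLN => ?_⟩
  rcases hLN.lt_or_eq with hLN | hLN
  · exact Or.inl ((hmax ⟨hL, hLN⟩ hML).antisymm hML)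
  · exact Or.inr hLN

theorem le_centralizer_of_forall_isChiefFactor {G : Type*} [Group G] [Finite G]
    {T : Subgroup G} (hT : ⁅T, T⁆ = T) {N : Subgroup G} (hN : N.Normal)
    (hcyc : ∀ K H : Subgroup G, ∀ hc : IsChiefFactor G K H, H ≤ N →
      letI := hc.1; IsCyclic (H ⧸ K.subgroupOf H)) :
    T ≤ Subgroup.centralizer (N : Set G) := by
  induction N using WellFoundedLT.induction with
  | _ N ih =>
  obtain rfl | hN₀ := eq_or_ne N ⊥
  · exact fun g _ => Subgroup.mem_centralizer_iff.2 (by simp)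
  obtain ⟨M, hc⟩ := exists_isChiefFactor_of_ne_bot hN hN₀
  have := hc.1
  have := hN
  have := hcyc M N hc le_rfl
  refine Subgroup.le_centralizer_of_isCyclic_quotient hT (ih M hc.2.2.1 hc.1 ?_)
  exact fun K H hc' hH => hcyc K H hc' (hH.trans hc.2.2.1.le)

theorem exists_derivedSeries_succ_eq (G : Type*) [Group G] [Finite G] :
    ∃ k, derivedSeries G (k + 1) = derivedSeries G k := by
  obtain ⟨n, hn⟩ := WellFoundedLT.antitone_chain_condition (derivedSeries_antitone G)
  exact ⟨n, (hn _ n.le_succ).symm⟩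

theorem isSolvable_quotient_derivedSeries (G : Type*) [Group G] (k : ℕ) :
    Group.IsSolvable (G ⧸ derivedSeries G k) :=
  ⟨k, by rw [← map_derivedSeries_eq (QuotientGroup.mk'_surjective _), Subgroup.map_eq_bot_iff,
    QuotientGroup.ker_mk']⟩

section SigmaSoluble

variable {ι : Type*} {σ : ι → Set ℕ}

theorem isSigmaSoluble_of_isSolvable (hσ : IsPrimePartition σ) (X : Type*) [Group X] [Finite X]
    [Group.IsSolvable X] : IsSigmaSoluble σ X := by
  intro K H hc
  have := hc.1
  have hcb := hc.map_mk'
  have hcard : Nat.card (H ⧸ K.subgroupOf H) = Nat.card (H.map (QuotientGroup.mk' K)) :=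
    Nat.card_congr (Subgroup.quotientSubgroupOfEquivMap K H).toEquiv
  obtain ⟨p, hp, hpH⟩ := Nat.exists_prime_and_dvd
    ((Subgroup.card_eq_one.not).2 hcb.2.2.1.ne')
  obtain ⟨i, hi, -⟩ := hσ.existsUnique_mem p hp
  refine ⟨i, fun r hr hrH => ?_⟩
  have := Fact.mk hp
  have := Fact.mk hr
  rw [hcard] at hrH
  rwa [hcb.eq_of_prime_dvd_card hcb.commutator_eq_bot hpH hrH]

theorem sigmaSolubleResidual_le_derivedSeries (hσ : IsPrimePartition σ) (G : Type*) [Group G]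
    [Finite G] (k : ℕ) : sigmaSolubleResidual σ G ≤ derivedSeries G k :=
  have := isSolvable_quotient_derivedSeries G k
  sInf_le ⟨inferInstance, isSigmaSoluble_of_isSolvable hσ _⟩

end SigmaSoluble

theorem solubleRadical_normal (G : Type*) [Group G] : (solubleRadical G).Normal :=
  Subgroup.sSup_normal _ fun _ h => h.1

theorem isSolvable_solubleRadical (G : Type*) [Group G] [Finite G] :
    Group.IsSolvable (solubleRadical G) := by
  refine (SupClosed.sSup_mem (s := {N : Subgroup G | N.Normal ∧ Group.IsSolvable N}) ?_
    (Set.toFinite _) ⟨inferInstance, inferInstance⟩ subset_rfl).2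
  rintro A ⟨hA, hAs⟩ B ⟨hB, hBs⟩
  exact ⟨Subgroup.sup_normal A B, Subgroup.isSolvable_sup_of_normal⟩

theorem sigmaNilpotentResidual_normal {ι : Type*} (σ : ι → Set ℕ) (G : Type*) [Group G] :
    (sigmaNilpotentResidual σ G).Normal :=
  Subgroup.sInf_normal _ fun _ h => h.1

theorem statement_16_general {ι : Type*} (σ : ι → Set ℕ) (hσ : IsPrimePartition σ)
    (G : Type*) [Group G] [Finite G]
    (hSC : IsSigmaSCGroup σ G) :
    sigmaSolubleResidual σ G ≤
      Subgroup.centralizer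
        ((solubleRadical G ⊓ sigmaNilpotentResidual σ G : Subgroup G) : Set G) := by
  obtain ⟨k, hk⟩ := exists_derivedSeries_succ_eq G
  have hperfect : ⁅derivedSeries G k, derivedSeries G k⁆ = derivedSeries G k :=
    (derivedSeries_succ G k).symm.trans hk
  have := solubleRadical_normal G
  have := sigmaNilpotentResidual_normal σ G
  have := isSolvable_solubleRadical G
  refine (sigmaSolubleResidual_le_derivedSeries hσ G k).trans
    (le_centralizer_of_forall_isChiefFactor hperfect inferInstance fun K H hc hH => ?_)
  have := hc.1
  have := hSC K H hc (hH.trans inf_le_right)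
  have : Group.IsSolvable H :=
    Group.isSolvable_of_isSolvable_injective (Subgroup.inclusion_injective (hH.trans inf_le_left))
  exact IsSimpleGroup.isCyclic_of_isSolvable _

/-- If `G` is a finite σ-SC-group with `G^{𝔖_σ} = G^{𝔘_σ}`, then
`G^{𝔖_σ} ≤ C_G(G_𝔖 ∩ G^{𝔑_σ})`. -/
theorem statement_16 {ι : Type*} (σ : ι → Set ℕ) (hσ : IsPrimePartition σ)
    (G : Type*) [Group G] [Finite G]
    (hSC : IsSigmaSCGroup σ G)
    (hres : sigmaSolubleResidual σ G = sigmaSupersolubleResidual σ G) :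
    sigmaSolubleResidual σ G ≤
      Subgroup.centralizer
        ((solubleRadical G ⊓ sigmaNilpotentResidual σ G : Subgroup G) : Set G) :=
  statement_16_general σ hσ G hSC
end

section
/- Let σ be a partition of the primes and G a finite σ-full group in which every σ-subnormal subgroup is σ-quasinormal (a QσT-group). Then G is a σ-SC-group: every chief factor of G below the σ-nilpotent residual G^{𝔑_σ} is simple. -/
open Subgroup
open scoped Pointwise

/-!
Let `H/K` be a chief factor of `G`. Every `K ≤ L ≤ H` normalized by `H` is subnormal, hence
σ-subnormal, hence modular, and the modular law `(L ⊔ ⟨g⟩) ⊓ H = L ⊔ (⟨g⟩ ⊓ H)` gives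
`L^g ≤ L ⊔ (⟨g⟩ ⊓ H)` for every `g ∈ G`. Suppose such an `L` lies strictly between `K` and `H`.
For `L` maximal there is a conjugate `L^g ≰ L`, and then `L ⊔ L^g = H`, so `H/L` is cyclic; by
minimality `H/K` is abelian, hence of prime exponent `p`. A `p'`-element `g` meets `H` inside `K`,
so it normalizes every subgroup between `K` and `H`. The centralizer of a Sylow `p`-subgroup `P`
in `H/K` is nontrivial and normalized by `P` and by all `p'`-elements, which generate `G`; so it
is all of `H/K`. Now `L` is normalized by `P` and by all `p'`-elements, so `L` is normal in `G`,
a contradiction. Hence `H/K` is simple.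
-/

open scoped commutatorElement

section

variable {G : Type*} [Group G]

theorem QuotientGroup.commute_mk_iff {K : Subgroup G} [K.Normal] {a b : G} :
    Commute (a : G ⧸ K) (b : G ⧸ K) ↔ ⁅a, b⁆ ∈ K := by
  rw [← commutatorElement_eq_one_iff_commute, ← QuotientGroup.eq_one_iff]
  simp [commutatorElement_def]

namespace Subgroup

theorem commutator_le_of_sup_eq {L C H : Subgroup G} (hHL : H ≤ normalizer (L : Set G))
    [IsMulCommutative C] (hsup : L ⊔ C = H) : ⁅H, H⁆ ≤ L := by
  have hLH : L ≤ H := hsup ▸ le_sup_left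
  have hCH : C ≤ H := hsup ▸ le_sup_right
  have : (L.subgroupOf H).Normal := (normal_subgroupOf_iff_le_normalizer hLH).mpr hHL
  have hsup' : L.subgroupOf H ⊔ C.subgroupOf H = ⊤ := by
    rw [← subgroupOf_sup hLH hCH, hsup, subgroupOf_self]
  rw [← map_subtype_commutator, ← inf_of_le_left hLH, ← subgroupOf_map_subtype]
  exact map_mono (Normal.commutator_le_of_self_sup_commutative_eq_top hsup' inferInstance)

theorem zpowers_inf_le_of_pow_mem {K H : Subgroup G} {p : ℕ} (hp : p.Prime)
    (hexp : ∀ h ∈ H, h ^ p ∈ K) {g : G} (hg : ¬ p ∣ orderOf g) : zpowers g ⊓ H ≤ K := by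
  rintro u ⟨hug, huH⟩
  have hcop : p.Coprime (orderOf u) :=
    hp.coprime_iff_not_dvd.mpr fun h => hg (h.trans (orderOf_dvd_of_mem_zpowers hug))
  obtain ⟨m, hm⟩ := exists_pow_eq_self_of_coprime hcop
  exact hm ▸ pow_mem (hexp u huH) m

end Subgroup

theorem IsModularSubgroup.map_conj_le_sup {L H : Subgroup G} (hL : IsModularSubgroup L)
    (hLH : L ≤ H) [hH : H.Normal] (g : G) :
    L.map (MulAut.conj g).toMonoidHom ≤ L ⊔ (zpowers g ⊓ H) := by
  rw [hL.2 (zpowers g) H hLH]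
  rintro _ ⟨x, hx, rfl⟩
  have hg : g ∈ L ⊔ zpowers g := mem_sup_right (mem_zpowers g)
  exact mem_inf.mpr ⟨mul_mem (mul_mem hg (mem_sup_left hx)) (inv_mem hg), hH.conj_mem x (hLH hx) g⟩

theorem IsModularSubgroup.mem_normalizer_of_zpowers_inf_le [Finite G] {L H : Subgroup G}
    (hL : IsModularSubgroup L) (hLH : L ≤ H) [H.Normal] {g : G} (hg : zpowers g ⊓ H ≤ L) :
    g ∈ normalizer (L : Set G) :=
  mem_normalizer_fintype fun x hx => by
    simpa [sup_eq_left.mpr hg] using hL.map_conj_le_sup hLH g (mem_map_of_mem _ hx)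

theorem IsModularSubgroup.commutator_le_of_sup_map_conj_eq {M H : Subgroup G}
    (hM : IsModularSubgroup M) [H.Normal] (hHM : H ≤ normalizer (M : Set G)) {g : G}
    (hJ : M ⊔ M.map (MulAut.conj g).toMonoidHom = H) : ⁅H, H⁆ ≤ M := by
  have hMH : M ≤ H := hJ ▸ le_sup_left
  have : IsMulCommutative (zpowers g ⊓ H : Subgroup G) := .of_setLike_mul_comm
    fun _ ha _ hb => setLike_mul_comm (s := zpowers g) ha.1 hb.1
  refine commutator_le_of_sup_eq hHM (C := zpowers g ⊓ H) (le_antisymm (sup_le hMH inf_le_right) ?_)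
  exact hJ.symm.le.trans (sup_le le_sup_left (hM.map_conj_le_sup hMH g))

theorem isSigmaSubnormal_of_le_normalizer {ι : Type*} (σ : ι → Set ℕ) {L H : Subgroup G}
    [H.Normal] (hLH : L ≤ H) (hHL : H ≤ normalizer (L : Set G)) : IsSigmaSubnormal σ L := by
  refine ⟨2, ![L, H, ⊤], rfl, rfl, fun k => ?_⟩
  fin_cases k
  · exact ⟨hLH, Or.inl ((normal_subgroupOf_iff_le_normalizer hLH).mpr hHL)⟩
  · exact ⟨le_top, Or.inl (show (H.subgroupOf ⊤).Normal from inferInstance)⟩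

theorem Sylow.eq_top_of_le_of_forall_not_dvd_orderOf [Finite G] {p : ℕ} [Fact p.Prime]
    (P : Sylow p G) {N : Subgroup G} (hPN : (P : Subgroup G) ≤ N)
    (hN : ∀ g : G, ¬ p ∣ orderOf g → g ∈ N) : N = ⊤ := by
  set O := normalClosure {g : G | ¬ p ∣ orderOf g}
  have hON : O ≤ N := (closure_le N).mpr fun x hx => by
    obtain ⟨a, ha, c, hc⟩ := Group.mem_conjugatesOfSet_iff.mp hx
    exact hN x (hc.orderOf_eq ▸ ha)
  -- `g ^ p ^ k` with `p ^ k` the `p`-part of `orderOf g` is a `p'`-element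
  have hpO : IsPGroup p (G ⧸ O) := fun q => QuotientGroup.induction_on q fun g => by
    refine ⟨(orderOf g).factorization p, ?_⟩
    rw [← QuotientGroup.mk_pow, QuotientGroup.eq_one_iff]
    apply subset_normalClosure
    show ¬ p ∣ _
    rw [orderOf_pow' _ (pow_ne_zero _ (Fact.out : p.Prime).ne_zero),
      Nat.gcd_eq_right (Nat.ordProj_dvd _ p)]
    exact Nat.not_dvd_ordCompl Fact.out (orderOf_pos g).ne'
  obtain ⟨m, hm⟩ := IsPGroup.iff_card.mp hpO
  have hcop : (p ^ m).Coprime (P : Subgroup G).index :=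
    Nat.Coprime.pow_left m ((Nat.Prime.coprime_iff_not_dvd Fact.out).mpr P.not_dvd_index)
  refine index_eq_one.mp (Nat.eq_one_of_dvd_coprimes hcop ?_ (index_dvd_of_le hPN))
  rw [← hm, ← index_eq_card]
  exact index_dvd_of_le hON

theorem IsPGroup.exists_ne_one_forall_commute [Finite G] {p : ℕ} [Fact p.Prime]
    {P N : Subgroup G} (hP : IsPGroup p P) (hN : IsPGroup p N) [N.Normal] (hN1 : N ≠ ⊥) :
    ∃ n ∈ N, n ≠ 1 ∧ ∀ x ∈ P, Commute x n := by
  let : MulAction P N := MulAction.compHom N ((MulAut.conjNormal (H := N)).comp P.subtype)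
  have : Nontrivial N := (nontrivial_iff_ne_bot N).mpr hN1
  obtain ⟨k, hk, hcard⟩ := hN.nontrivial_iff_card.mp this
  obtain ⟨n, hn, hn1⟩ := hP.exists_fixed_point_of_prime_dvd_card_of_fixed_point N
    (hcard ▸ dvd_pow_self p hk.ne') (a := 1) fun x => map_one (MulAut.conjNormal (x : G))
  refine ⟨n, n.2, fun h => hn1 (Subtype.ext h.symm), fun x hx => ?_⟩
  have hconj : x * n * x⁻¹ = n := by
    rw [← MulAut.conjNormal_apply]
    exact congrArg Subtype.val (hn ⟨x, hx⟩)
  exact mul_inv_eq_iff_eq_mul.mp hconj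

namespace IsChiefFactor

variable [Finite G] {K H : Subgroup G}

theorem commutator_le_of_lt (hc : IsChiefFactor G K H)
    (hmod : ∀ L, K ≤ L → L ≤ H → H ≤ normalizer (L : Set G) → IsModularSubgroup L)
    {L : Subgroup G} (hKL : K < L) (hLH : L < H) (hHL : H ≤ normalizer (L : Set G)) :
    ⁅H, H⁆ ≤ K := by
  obtain ⟨hK, hH, -, hmin⟩ := hc
  obtain ⟨M, ⟨hKM, hMH, hHM⟩, hMmax⟩ := Set.Finite.exists_maximalFor id
    {M : Subgroup G | K < M ∧ M < H ∧ H ≤ normalizer (M : Set G)} (Set.toFinite _)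
    ⟨L, hKL, hLH, hHL⟩
  obtain ⟨g, hg⟩ : ∃ g : G, ¬ M.map (MulAut.conj g).toMonoidHom ≤ M := by
    by_contra! hall
    have hMn : M.Normal := ⟨fun x hx g => by simpa using hall g (mem_map_of_mem _ hx)⟩
    rcases hmin M hMn hKM.le hMH.le with h | h
    exacts [hKM.ne' h, hMH.ne h]
  set Mg := M.map (MulAut.conj g).toMonoidHom
  have hHMg : H ≤ normalizer (Mg : Set G) := by
    rw [← map_equiv_normalizer_eq]
    intro h hh
    refine ⟨g⁻¹ * h * g, hHM (by simpa using hH.conj_mem h hh g⁻¹), ?_⟩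
    simp [mul_assoc]
  have hJH : M ⊔ Mg ≤ H := sup_le hMH.le (by
    rintro _ ⟨x, hx, rfl⟩
    exact hH.conj_mem x (hMH.le hx) g)
  have hJ : M ⊔ Mg = H := by
    by_contra hne
    exact hg (le_sup_right.trans (hMmax ⟨hKM.trans_le le_sup_left, lt_of_le_of_ne hJH hne,
      le_inf hHM hHMg |>.trans (normalizer_inf_normalizer_le_normalizer_sup M Mg)⟩ le_sup_left))
  have hHM' : ⁅H, H⁆ ≤ M := (hmod M hKM.le hMH.le hHM).commutator_le_of_sup_map_conj_eq hHM hJ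
  rcases hmin (K ⊔ ⁅H, H⁆) inferInstance le_sup_left (sup_le (hKM.le.trans hMH.le)
    (commutator_le_self H)) with h | h
  · exact h ▸ le_sup_right
  · exact absurd (h.symm.le.trans (sup_le hKM.le hHM')) hMH.not_ge

theorem exists_prime_pow_mem (hc : IsChiefFactor G K H) (hab : ⁅H, H⁆ ≤ K) :
    ∃ p : ℕ, p.Prime ∧ ∀ h ∈ H, h ^ p ∈ K := by
  obtain ⟨hK, hH, hKH, hmin⟩ := hc
  have hpow : ∀ {x : G} {n : ℕ}, x ^ n ∈ K ↔ (x : G ⧸ K) ^ n = 1 := by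
    intro x n
    rw [← QuotientGroup.mk_pow, QuotientGroup.eq_one_iff]
  obtain ⟨y, hyH, hyK⟩ := SetLike.exists_of_lt hKH
  set n := orderOf (y : G ⧸ K)
  have hn1 : n ≠ 1 := by rwa [Ne, orderOf_eq_one_iff, QuotientGroup.eq_one_iff]
  set p := n.minFac
  set z := y ^ (n / p)
  have hz : orderOf (z : G ⧸ K) = p := by
    rw [QuotientGroup.mk_pow]
    exact orderOf_pow_orderOf_div (orderOf_pos _).ne' (Nat.minFac_dvd n)
  let Ω : Subgroup G :=
    { carrier := {h | h ∈ H ∧ h ^ p ∈ K}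
      one_mem' := ⟨one_mem H, by simp⟩
      mul_mem' := fun {a b} ⟨ha, hap⟩ ⟨hb, hbp⟩ => ⟨mul_mem ha hb, by
        rw [hpow] at hap hbp ⊢
        rw [QuotientGroup.mk_mul, (QuotientGroup.commute_mk_iff.mpr
          (hab (commutator_mem_commutator ha hb))).mul_pow, hap, hbp, one_mul]⟩
      inv_mem' := fun {a} ⟨ha, hap⟩ => ⟨inv_mem ha, by rw [inv_pow]; exact inv_mem hap⟩ }
  have hΩ : Ω.Normal := ⟨fun h ⟨hh, hhp⟩ g => ⟨hH.conj_mem h hh g, by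
    rw [conj_pow]
    exact hK.conj_mem _ hhp g⟩⟩
  rcases hmin Ω hΩ (fun k hk => ⟨hKH.le hk, pow_mem hk p⟩) (fun _ h => h.1) with h | h
  · have hzΩ : z ∈ Ω := ⟨pow_mem hyH _, hpow.mpr (hz ▸ pow_orderOf_eq_one _)⟩
    rw [h, ← QuotientGroup.eq_one_iff, ← orderOf_eq_one_iff, hz] at hzΩ
    exact absurd hzΩ (Nat.minFac_prime hn1).ne_one
  · exact ⟨p, Nat.minFac_prime hn1, fun x hx => (h ▸ hx : x ∈ Ω).2⟩

theorem commutator_sylow_le {p : ℕ} [Fact p.Prime] (hc : IsChiefFactor G K H)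
    (hexp : ∀ h ∈ H, h ^ p ∈ K) (P : Sylow p G)
    (hp' : ∀ M, K ≤ M → M ≤ H → ∀ g : G, ¬ p ∣ orderOf g → g ∈ normalizer (M : Set G)) :
    ⁅(P : Subgroup G), H⁆ ≤ K := by
  obtain ⟨hK, hH, hKH, hmin⟩ := hc
  set π := QuotientGroup.mk' K
  set W := H ⊓ (centralizer ((P : Subgroup G).map π : Set (G ⧸ K))).comap π
  have hmemW : ∀ {w}, w ∈ W ↔ w ∈ H ∧ ∀ x ∈ (P : Subgroup G), ⁅x, w⁆ ∈ K := by
    intro w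
    simp only [W, π, mem_inf, mem_comap, mem_centralizer_iff, mem_map, SetLike.mem_coe,
      forall_exists_index, and_imp, forall_apply_eq_imp_iff₂, QuotientGroup.mk'_apply]
    exact and_congr_right fun _ => forall₂_congr fun x _ => QuotientGroup.commute_mk_iff
  have hKW : K ≤ W := fun k hk => hmemW.mpr ⟨hKH.le hk, fun x _ => by
    simpa [commutatorElement_def, mul_assoc] using mul_mem (hK.conj_mem k hk x) (inv_mem hk)⟩
  have hPW : (P : Subgroup G) ≤ normalizer (W : Set G) :=
    le_normalizer_iff_commutator_le_right.mpr <| commutator_le.mpr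
      fun x hx w hw => hKW ((hmemW.mp hw).2 x hx)
  have hW : W.Normal :=
    normalizer_eq_top_iff.mp (P.eq_top_of_le_of_forall_not_dvd_orderOf hPW (hp' W hKW inf_le_left))
  have : (H.map π).Normal := hH.map π (QuotientGroup.mk'_surjective K)
  have hHp : IsPGroup p (H.map π) := fun ⟨_, h, hh, hπ⟩ => ⟨1, Subtype.ext <| by
    simp only [pow_one, SubmonoidClass.coe_pow, ← hπ, OneMemClass.coe_one, π,
      QuotientGroup.mk'_apply, ← QuotientGroup.mk_pow, QuotientGroup.eq_one_iff]
    exact hexp h hh⟩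
  have hH1 : H.map π ≠ ⊥ := by
    rw [Ne, Subgroup.map_eq_bot_iff, QuotientGroup.ker_mk']
    exact hKH.not_ge
  obtain ⟨_, ⟨w, hw, rfl⟩, hw1, hwP⟩ :=
    (P.isPGroup'.map π).exists_ne_one_forall_commute hHp hH1
  have hWH : W = H := (hmin W hW hKW inf_le_left).resolve_left fun h => hw1 <| by
    rw [QuotientGroup.mk'_apply, QuotientGroup.eq_one_iff, ← h]
    exact hmemW.mpr ⟨hw, fun x hx => QuotientGroup.commute_mk_iff.mp (hwP _ (mem_map_of_mem π hx))⟩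
  exact commutator_le.mpr fun x hx h hh => (hmemW.mp (hWH ▸ hh)).2 x hx

theorem eq_or_eq_of_forall_isModularSubgroup (hc : IsChiefFactor G K H)
    (hmod : ∀ L, K ≤ L → L ≤ H → H ≤ normalizer (L : Set G) → IsModularSubgroup L)
    {L : Subgroup G} (hKL : K ≤ L) (hLH : L ≤ H) (hHL : H ≤ normalizer (L : Set G)) :
    L = K ∨ L = H := by
  by_contra! hne
  have hab : ⁅H, H⁆ ≤ K := hc.commutator_le_of_lt hmod (lt_of_le_of_ne hKL hne.1.symm)
    (lt_of_le_of_ne hLH hne.2) hHL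
  obtain ⟨p, hp, hexp⟩ := hc.exists_prime_pow_mem hab
  have := Fact.mk hp
  have := hc.2.1
  obtain ⟨P⟩ : Nonempty (Sylow p G) := inferInstance
  -- a `p'`-element meets `H` inside `K`, so by modularity it normalizes every `K ≤ M ≤ H`
  have hp' : ∀ M, K ≤ M → M ≤ H → ∀ g : G, ¬ p ∣ orderOf g → g ∈ normalizer (M : Set G) :=
    fun M hKM hMH g hg => by
      have hHM : H ≤ normalizer (M : Set G) := le_normalizer_iff_commutator_le_right.mpr
        ((commutator_mono le_rfl hMH).trans (hab.trans hKM))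
      exact (hmod M hKM hMH hHM).mem_normalizer_of_zpowers_inf_le hMH
        ((zpowers_inf_le_of_pow_mem hp hexp hg).trans hKM)
  have hPL : (P : Subgroup G) ≤ normalizer (L : Set G) := le_normalizer_iff_commutator_le_right.mpr
    ((commutator_mono le_rfl hLH).trans ((hc.commutator_sylow_le hexp P hp').trans hKL))
  have hL : L.Normal :=
    normalizer_eq_top_iff.mp (P.eq_top_of_le_of_forall_not_dvd_orderOf hPL (hp' L hKL hLH))
  rcases hc.2.2.2 L hL hKL hLH with h | h
  exacts [hne.1 h, hne.2 h]

end IsChiefFactor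

theorem isSimpleGroup_quotient_of_forall_eq_or_eq {K H : Subgroup G} [K.Normal] (hKH : K < H)
    (h : ∀ L, K ≤ L → L ≤ H → H ≤ normalizer (L : Set G) → L = K ∨ L = H) :
    IsSimpleGroup (H ⧸ K.subgroupOf H) := by
  have : Nontrivial (H ⧸ K.subgroupOf H) := by
    rw [QuotientGroup.nontrivial_iff, Ne, subgroupOf_eq_top]
    exact hKH.not_ge
  refine ⟨fun N hN => ?_⟩
  set π := QuotientGroup.mk' (K.subgroupOf H)
  set M := N.comap π
  have hMH : (M.map H.subtype).subgroupOf H = M :=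
    comap_map_eq_self_of_injective H.subtype_injective M
  have hNM : M.map π = N := map_comap_eq_self_of_surjective (QuotientGroup.mk'_surjective _) N
  have hKM : K ≤ M.map H.subtype := by
    rw [← inf_of_le_left hKH.le, ← subgroupOf_map_subtype]
    refine map_mono fun k hk => ?_
    simp [M, π, (QuotientGroup.eq_one_iff _).mpr hk, one_mem]
  have hHM : H ≤ normalizer (M.map H.subtype : Set G) := by
    rw [← normal_subgroupOf_iff_le_normalizer (map_subtype_le M), hMH]
    exact hN.comap π
  rcases h _ hKM (map_subtype_le M) hHM with hL | hL
  · left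
    rw [← hNM, ← hMH, hL]
    exact (Subgroup.map_eq_bot_iff _).mpr (QuotientGroup.ker_mk' _).ge
  · right
    rw [← hNM, ← hMH, hL, subgroupOf_self]
    exact map_top_of_surjective _ (QuotientGroup.mk'_surjective _)

end

theorem statement_19_general {ι : Type*} (σ : ι → Set ℕ)
    (G : Type*) [Group G] [Finite G]
    (hQT : ∀ A : Subgroup G, IsSigmaSubnormal σ A → IsSigmaQuasinormal σ A) :
    IsSigmaSCGroup σ G := by
  intro K H hc _
  have := hc.1
  have := hc.2.1
  have hmod : ∀ L, K ≤ L → L ≤ H → H ≤ normalizer (L : Set G) → IsModularSubgroup L :=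
    fun L _ hLH hHL => (hQT L (isSigmaSubnormal_of_le_normalizer σ hLH hHL)).1
  exact isSimpleGroup_quotient_of_forall_eq_or_eq hc.2.2.1
    fun L => hc.eq_or_eq_of_forall_isModularSubgroup hmod

/-- A σ-full finite group in which every σ-subnormal subgroup is σ-quasinormal
(a QσT-group) is a σ-SC-group. -/
theorem statement_19 {ι : Type*} (σ : ι → Set ℕ) (hσ : IsPrimePartition σ)
    (G : Type*) [Group G] [Finite G]
    (hfull : IsSigmaFull σ G)
    (hQT : ∀ A : Subgroup G, IsSigmaSubnormal σ A → IsSigmaQuasinormal σ A) :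
    IsSigmaSCGroup σ G :=
  statement_19_general σ G hQT
end
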